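/- arXiv:math/0405067 — 9 statements merged into one kernel-verified Lean document; each statement's English description precedes it below -/
import Mathlib

section
/- Let (X, 𝒳, μ) be a standard Lebesgue space, {φ_t}_{t∈ℝ} a measurable nonsingular flow on X, {A_t}_{t∈ℝ} a jointly measurable cocycle for the flow taking values in ℝ∖{0}, and {F_t}_{t∈ℝ} an almost semi-additive functional related to the cocycle {A_t}. Then {F_t}_{t∈ℝ} has a version {F̃_t}_{t∈ℝ} which is a semi-additive functional related to the cocycle {A_t}, i.e. F̃_{t1+t2}(x) = F̃_{t1}(x) + A_{t1}(x) F̃_{t2}(φ_{t1}(x)) holds for all t1, t2 ∈ ℝ and all x ∈ X. -/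
open MeasureTheory

open MeasureTheory Set Filter ENNReal

set_option maxHeartbeats 1000000

noncomputable section

namespace Stmt1H

/-- auxiliary probability window measure on ℝ -/
def ι : Measure ℝ := volume.restrict (Set.Ioo (0:ℝ) 1)

lemma iota_univ : ι Set.univ = 1 := by
  simp [ι, Real.volume_Ioo]

lemma iota_ac : ι ≪ (volume : Measure ℝ) :=
  Measure.absolutelyContinuous_of_le Measure.restrict_le_self

instance : IsFiniteMeasure ι := by
  constructor
  rw [iota_univ]; exact ENNReal.one_lt_top

/-- generalized median of a function over the window -/
def med (f : ℝ → ℝ) : ℝ := sInf {a | (2 : ℝ≥0∞)⁻¹ ≤ ι {s | f s ≤ a}}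

lemma medSet_upclosed (f : ℝ → ℝ) {a b : ℝ} (hab : a ≤ b)
    (ha : a ∈ {a | (2 : ℝ≥0∞)⁻¹ ≤ ι {s | f s ≤ a}}) :
    b ∈ {a | (2 : ℝ≥0∞)⁻¹ ≤ ι {s | f s ≤ a}} := by
  refine le_trans ha (measure_mono ?_)
  intro s hs; exact le_trans hs hab

lemma medSet_nonempty {f : ℝ → ℝ} (hf : Measurable f) :
    Set.Nonempty {a | (2 : ℝ≥0∞)⁻¹ ≤ ι {s | f s ≤ a}} := by
  have hmono : Monotone (fun n : ℕ => {s : ℝ | f s ≤ n}) := by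
    intro n m hnm s hs
    simp only [Set.mem_setOf_eq] at hs ⊢
    exact le_trans hs (by exact_mod_cast hnm)
  have hU : (⋃ n : ℕ, {s : ℝ | f s ≤ n}) = Set.univ := by
    ext s; simp only [Set.mem_iUnion, Set.mem_setOf_eq, Set.mem_univ, iff_true]
    obtain ⟨n, hn⟩ := exists_nat_ge (f s)
    exact ⟨n, hn⟩
  have ht := tendsto_measure_iUnion_atTop (μ := ι) hmono
  rw [hU, iota_univ] at ht
  have : ∀ᶠ n : ℕ in atTop, (2 : ℝ≥0∞)⁻¹ < (ι ∘ fun n : ℕ => {s : ℝ | f s ≤ n}) n := by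
    apply ht.eventually_const_lt
    norm_num
  obtain ⟨n, hn⟩ := this.exists
  exact ⟨n, le_of_lt hn⟩

lemma medSet_bddBelow {f : ℝ → ℝ} (hf : Measurable f) :
    BddBelow {a | (2 : ℝ≥0∞)⁻¹ ≤ ι {s | f s ≤ a}} := by
  have hanti : Antitone (fun n : ℕ => {s : ℝ | f s ≤ -(n:ℝ)}) := by
    intro n m hnm s hs
    simp only [Set.mem_setOf_eq] at hs ⊢
    have : (n:ℝ) ≤ (m:ℝ) := by exact_mod_cast hnm
    linarith
  have hI : (⋂ n : ℕ, {s : ℝ | f s ≤ -(n:ℝ)}) = ∅ := by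
    ext s; simp only [Set.mem_iInter, Set.mem_setOf_eq, Set.mem_empty_iff_false, iff_false]
    intro h
    obtain ⟨n, hn⟩ := exists_nat_gt (-(f s))
    have := h n
    linarith
  have ht := tendsto_measure_iInter_atTop (μ := ι) (s := fun n : ℕ => {s : ℝ | f s ≤ -(n:ℝ)})
    (fun n => (show MeasurableSet {s : ℝ | f s ≤ -(n:ℝ)} from hf measurableSet_Iic).nullMeasurableSet)
    hanti ⟨0, measure_ne_top _ _⟩
  rw [hI, measure_empty] at ht
  have : ∀ᶠ n : ℕ in atTop, (ι ∘ fun n : ℕ => {s : ℝ | f s ≤ -(n:ℝ)}) n < (2:ℝ≥0∞)⁻¹ := by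
    apply ht.eventually_lt_const
    norm_num
  obtain ⟨n, hn⟩ := this.exists
  refine ⟨-(n:ℝ), fun a ha => ?_⟩
  by_contra hcon
  push_neg at hcon
  have : ι {s | f s ≤ a} ≤ ι {s | f s ≤ -(n:ℝ)} :=
    measure_mono (fun s hs => le_trans hs (le_of_lt hcon))
  exact absurd (le_trans ha this) (not_le.mpr hn)

lemma med_congr {f g : ℝ → ℝ} (h : f =ᵐ[volume] g) : med f = med g := by
  unfold med
  congr 1
  ext a
  have h' : f =ᵐ[ι] g := iota_ac.ae_eq h
  have : ι {s | f s ≤ a} = ι {s | g s ≤ a} := by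
    apply measure_congr
    filter_upwards [h'] with s hs
    show (f s ≤ a) = (g s ≤ a)
    rw [hs]
  simp only [Set.mem_setOf_eq, this]

lemma med_const (c : ℝ) : med (fun _ => c) = c := by
  unfold med
  have hs : ∀ a : ℝ, {s : ℝ | (fun _ : ℝ => c) s ≤ a} = if c ≤ a then (Set.univ : Set ℝ) else ∅ := by
    intro a
    by_cases hca : c ≤ a
    · simp only [hca, if_true]
      ext s; simp [hca]
    · simp only [hca, if_false]
      ext s; simp [hca]
  have : {a : ℝ | (2 : ℝ≥0∞)⁻¹ ≤ ι {s | (fun _ : ℝ => c) s ≤ a}} = Set.Ici c := by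
    ext a
    rw [Set.mem_setOf_eq, hs a]
    by_cases hca : c ≤ a
    · simp only [hca, if_true, iota_univ, Set.mem_Ici, iff_true]
      norm_num
    · simp only [hca, if_false, measure_empty, Set.mem_Ici, iff_false]
      norm_num
  rw [this, csInf_Ici]

lemma med_ae_const {f : ℝ → ℝ} {c : ℝ} (h : ∀ᵐ s ∂(volume : Measure ℝ), f s = c) :
    med f = c := by
  rw [med_congr (g := fun _ => c) h, med_const]

lemma med_add_const {f : ℝ → ℝ} (hf : Measurable f) (c : ℝ) :
    med (fun s => f s + c) = med f + c := by
  unfold med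
  have hset : {a : ℝ | (2 : ℝ≥0∞)⁻¹ ≤ ι {s | f s + c ≤ a}}
      = {a : ℝ | a - c ∈ {b : ℝ | (2 : ℝ≥0∞)⁻¹ ≤ ι {s | f s ≤ b}}} := by
    ext a
    simp only [Set.mem_setOf_eq]
    have : {s : ℝ | f s + c ≤ a} = {s : ℝ | f s ≤ a - c} := by
      ext s
      simp only [Set.mem_setOf_eq]
      constructor <;> intro h <;> linarith
    rw [this]
  rw [hset]
  set S := {b : ℝ | (2 : ℝ≥0∞)⁻¹ ≤ ι {s | f s ≤ b}} with hS
  have hne := medSet_nonempty hf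
  have hbd := medSet_bddBelow hf
  have hglb : IsGLB S (sInf S) := isGLB_csInf hne hbd
  have hglb2 : IsGLB {a : ℝ | a - c ∈ S} (sInf S + c) := by
    constructor
    · intro a ha
      have := hglb.1 ha
      linarith
    · intro b hb
      have : b - c ∈ lowerBounds S := by
        intro y hy
        have : y + c ∈ {a : ℝ | a - c ∈ S} := by simp [hy]
        have := hb this
        linarith
      have := hglb.2 this
      linarith
  have hne2 : {a : ℝ | a - c ∈ S}.Nonempty := by
    obtain ⟨b, hb⟩ := hne
    exact ⟨b + c, by simp; exact hb⟩
  exact IsGLB.csInf_eq hglb2 hne2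


attribute [irreducible] med

lemma med_lt_iff {f : ℝ → ℝ} (hf : Measurable f) (r : ℝ) :
    med f < r ↔ ∃ q : ℚ, (q:ℝ) < r ∧ (2:ℝ≥0∞)⁻¹ ≤ ι {s | f s ≤ (q:ℝ)} := by
  constructor
  · intro h
    have hne := medSet_nonempty hf
    have hbd := medSet_bddBelow hf
    rw [med] at h
    obtain ⟨b, hb, hbr⟩ := (csInf_lt_iff hbd hne).mp h
    obtain ⟨q, hq1, hq2⟩ := exists_rat_btwn hbr
    exact ⟨q, hq2, medSet_upclosed f (le_of_lt hq1) hb⟩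
  · rintro ⟨q, hq1, hq2⟩
    have : med f ≤ (q:ℝ) := by
      rw [med]
      exact csInf_le (medSet_bddBelow hf) hq2
    exact lt_of_le_of_lt this hq1

lemma measurable_med {α : Type*} [MeasurableSpace α] {h : α → ℝ → ℝ}
    (hm : Measurable (fun p : α × ℝ => h p.1 p.2)) :
    Measurable (fun a => med (h a)) := by
  apply measurable_of_Iio
  intro r
  have hma : ∀ a : α, Measurable (h a) := fun a =>
    hm.comp (measurable_prodMk_left)
  have hre : (fun a => med (h a)) ⁻¹' Set.Iio r
      = ⋃ q : ℚ, ({a : α | (q:ℝ) < r} ∩ {a : α | (2:ℝ≥0∞)⁻¹ ≤ ι {s | h a s ≤ (q:ℝ)}}) := by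
    ext a
    simp only [Set.mem_preimage, Set.mem_Iio, Set.mem_iUnion, Set.mem_inter_iff,
      Set.mem_setOf_eq]
    exact med_lt_iff (hma a) r
  rw [hre]
  refine MeasurableSet.iUnion fun q => ?_
  refine (MeasurableSet.const _).inter ?_
  have hT : MeasurableSet {p : α × ℝ | h p.1 p.2 ≤ (q:ℝ)} :=
    measurableSet_le hm measurable_const
  have hmeas : Measurable fun a : α => ι (Prod.mk a ⁻¹' {p : α × ℝ | h p.1 p.2 ≤ (q:ℝ)}) :=
    measurable_measure_prodMk_left (ν := ι) hT
  have : {a : α | (2:ℝ≥0∞)⁻¹ ≤ ι {s | h a s ≤ (q:ℝ)}}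
      = (fun a : α => ι (Prod.mk a ⁻¹' {p : α × ℝ | h p.1 p.2 ≤ (q:ℝ)})) ⁻¹' (Set.Ici (2:ℝ≥0∞)⁻¹) := rfl
  rw [this]
  exact hmeas measurableSet_Ici

lemma prod_null_right {α β : Type*} [MeasurableSpace α] [MeasurableSpace β]
    (ρa : Measure α) (ρb : Measure β) [SFinite ρa] [SFinite ρb]
    {S : Set (α × β)} (hm : MeasurableSet S) :
    (ρa.prod ρb) S = 0 ↔ ∀ᵐ b ∂ρb, ρa {a | (a, b) ∈ S} = 0 := by
  have h1 : (ρa.prod ρb) S = (ρb.prod ρa) (Prod.swap ⁻¹' S) := by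
    conv_lhs => rw [← Measure.prod_swap]
    rw [Measure.map_apply measurable_swap hm]
  rw [h1, Measure.measure_prod_null (measurable_swap hm)]
  constructor
  · intro h; filter_upwards [h] with b hb; exact hb
  · intro h; filter_upwards [h] with b hb; exact hb

lemma vol_ne_zero : (volume : Measure ℝ) ≠ 0 := by
  intro h
  have : (volume : Measure ℝ) (Set.Ioo (0:ℝ) 1) = 1 := by simp [Real.volume_Ioo]
  rw [h] at this
  simp at this

instance : (ae (volume : Measure ℝ)).NeBot := ae_neBot.mpr vol_ne_zero

lemma exists_ae_const {g : ℝ → ℝ} (hg : Measurable g)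
    (h : ((volume : Measure ℝ).prod volume) {p : ℝ × ℝ | g p.1 ≠ g p.2} = 0) :
    ∃ c, ∀ᵐ s ∂(volume:Measure ℝ), g s = c := by
  have hm : MeasurableSet {p : ℝ × ℝ | g p.1 ≠ g p.2} :=
    (measurableSet_eq_fun (hg.comp measurable_fst) (hg.comp measurable_snd)).compl
  rw [prod_null_right _ _ hm] at h
  obtain ⟨s', hs'⟩ := h.exists
  refine ⟨g s', ?_⟩
  rw [ae_iff]
  exact hs'

lemma ae_shift {p : ℝ → Prop} (hp : MeasurableSet {s | p s}) (t : ℝ)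
    (h : ∀ᵐ s ∂(volume:Measure ℝ), p s) : ∀ᵐ s ∂(volume:Measure ℝ), p (s + t) := by
  have hmp := measurePreserving_add_right (volume : Measure ℝ) t
  rw [ae_iff] at h ⊢
  have heq : {s : ℝ | ¬ p (s + t)} = (· + t) ⁻¹' {s | ¬ p s} := rfl
  rw [heq]
  have := hmp.measure_preimage (s := {s : ℝ | ¬ p s}) (by
    have : {s : ℝ | ¬ p s} = {s : ℝ | p s}ᶜ := rfl
    rw [this]; exact hp.compl.nullMeasurableSet)
  rw [this]
  exact h


section Main

variable {X : Type*} [MeasurableSpace X]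
variable (φ : ℝ → X → X) (A : ℝ → X → ℝ) (F : ℝ → X → ℝ)

/-- the lifted increment function -/
def gam (x : X) (u s : ℝ) : ℝ := A u x * F (s - u) (φ u x)

def nn (x : X) (u : ℝ) : ℝ := med (gam φ A F x u)

def dd (x : X) (u s : ℝ) : ℝ := gam φ A F x u s - nn φ A F x u

def ww (x : X) (s : ℝ) : ℝ := med (fun u => dd φ A F x u s)

def MM (x : X) : ℝ := med (fun s => F s x)

def cor (t : ℝ) (x : X) : ℝ :=
  med (fun s => ww φ A F x (s + t) - A t x * ww φ A F (φ t x) s)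

def BadS (x : X) : Set ((ℝ × ℝ) × ℝ × ℝ) :=
  {q | gam φ A F x q.1.1 q.2.1 - gam φ A F x q.1.2 q.2.1
      ≠ gam φ A F x q.1.1 q.2.2 - gam φ A F x q.1.2 q.2.2}

def GoodP (x : X) : Prop :=
  (((volume : Measure ℝ).prod volume).prod ((volume : Measure ℝ).prod volume)) (BadS φ A F x) = 0

def FF (t : ℝ) (x : X) : ℝ :=
  Set.indicator {y | GoodP φ A F y} (fun y => cor φ A F t y) x
    + MM F x - A t x * MM F (φ t x)

attribute [irreducible] gam nn dd ww MM cor BadS GoodP FF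

variable (hφm : Measurable (fun p : ℝ × X => φ p.1 p.2))
variable (hAm : Measurable (fun p : ℝ × X => A p.1 p.2))
variable (hFm : Measurable (fun p : ℝ × X => F p.1 p.2))

section Meas
include hφm hAm hFm

lemma meas_gam : Measurable (fun p : X × ℝ × ℝ => gam φ A F p.1 p.2.1 p.2.2) := by
  unfold gam
  apply Measurable.mul
  · exact hAm.comp ((measurable_fst.comp measurable_snd).prodMk measurable_fst)
  · exact hFm.comp (((measurable_snd.comp measurable_snd).sub
      (measurable_fst.comp measurable_snd)).prodMk
      (hφm.comp ((measurable_fst.comp measurable_snd).prodMk measurable_fst)))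

lemma meas_gam_x (x : X) (u : ℝ) : Measurable (gam φ A F x u) := by
  have := (meas_gam φ A F hφm hAm hFm).comp
    (f := fun s : ℝ => ((x, u, s) : X × ℝ × ℝ))
    (measurable_const.prodMk (measurable_const.prodMk measurable_id))
  exact this

lemma meas_nn : Measurable (fun p : X × ℝ => nn φ A F p.1 p.2) := by
  unfold nn
  exact measurable_med (h := fun (p : X × ℝ) (s : ℝ) => gam φ A F p.1 p.2 s)
    ((meas_gam φ A F hφm hAm hFm).comp
    ((measurable_fst.comp measurable_fst).prodMk
      ((measurable_snd.comp measurable_fst).prodMk measurable_snd)))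

lemma meas_dd : Measurable (fun p : X × ℝ × ℝ => dd φ A F p.1 p.2.1 p.2.2) := by
  unfold dd
  exact (meas_gam φ A F hφm hAm hFm).sub
    ((meas_nn φ A F hφm hAm hFm).comp
      (measurable_fst.prodMk (measurable_fst.comp measurable_snd)))

lemma meas_dd_x (x : X) : Measurable (fun q : ℝ × ℝ => dd φ A F x q.1 q.2) := by
  exact (meas_dd φ A F hφm hAm hFm).comp (measurable_const.prodMk measurable_id)

lemma meas_ww : Measurable (fun p : X × ℝ => ww φ A F p.1 p.2) := by
  unfold ww
  exact measurable_med (h := fun (p : X × ℝ) (u : ℝ) => dd φ A F p.1 u p.2)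
    ((meas_dd φ A F hφm hAm hFm).comp
    ((measurable_fst.comp measurable_fst).prodMk
      (measurable_snd.prodMk (measurable_snd.comp measurable_fst))))

lemma meas_ww_x (x : X) : Measurable (ww φ A F x) :=
  (meas_ww φ A F hφm hAm hFm).comp (measurable_const.prodMk measurable_id)

omit hφm hAm in
lemma meas_MM : Measurable (fun x : X => MM F x) := by
  unfold MM
  exact measurable_med (h := fun (x : X) (s : ℝ) => F s x)
    (hFm.comp (measurable_snd.prodMk measurable_fst))

lemma meas_cor : Measurable (fun p : ℝ × X => cor φ A F p.1 p.2) := by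
  unfold cor
  apply measurable_med (h := fun (p : ℝ × X) (s : ℝ) =>
    ww φ A F p.2 (s + p.1) - A p.1 p.2 * ww φ A F (φ p.1 p.2) s)
  apply Measurable.sub
  · exact (meas_ww φ A F hφm hAm hFm).comp
      ((measurable_snd.comp measurable_fst).prodMk
        (measurable_snd.add (measurable_fst.comp measurable_fst)))
  · apply Measurable.mul
    · exact hAm.comp
        ((measurable_fst.comp measurable_fst).prodMk (measurable_snd.comp measurable_fst))
    · exact (meas_ww φ A F hφm hAm hFm).comp
        ((hφm.comp ((measurable_fst.comp measurable_fst).prodMk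
          (measurable_snd.comp measurable_fst))).prodMk measurable_snd)

lemma meas_BadS_pair :
    MeasurableSet {p : X × ((ℝ × ℝ) × ℝ × ℝ) | p.2 ∈ BadS φ A F p.1} := by
  unfold BadS
  have hg : ∀ (f : (X × ((ℝ × ℝ) × ℝ × ℝ)) → ℝ × ℝ), Measurable f →
      Measurable (fun p : X × ((ℝ × ℝ) × ℝ × ℝ) => gam φ A F p.1 (f p).1 (f p).2) := by
    intro f hf
    exact (meas_gam φ A F hφm hAm hFm).comp
      (measurable_fst.prodMk ((hf.fst).prodMk (hf.snd)))
  have h11 := hg (fun p => (p.2.1.1, p.2.2.1))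
    ((measurable_fst.comp (measurable_fst.comp measurable_snd)).prodMk
     (measurable_fst.comp (measurable_snd.comp measurable_snd)))
  have h21 := hg (fun p => (p.2.1.2, p.2.2.1))
    ((measurable_snd.comp (measurable_fst.comp measurable_snd)).prodMk
     (measurable_fst.comp (measurable_snd.comp measurable_snd)))
  have h12 := hg (fun p => (p.2.1.1, p.2.2.2))
    ((measurable_fst.comp (measurable_fst.comp measurable_snd)).prodMk
     (measurable_snd.comp (measurable_snd.comp measurable_snd)))
  have h22 := hg (fun p => (p.2.1.2, p.2.2.2))
    ((measurable_snd.comp (measurable_fst.comp measurable_snd)).prodMk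
     (measurable_snd.comp (measurable_snd.comp measurable_snd)))
  exact (measurableSet_eq_fun (h11.sub h21) (h12.sub h22)).compl

lemma meas_BadS (x : X) : MeasurableSet (BadS φ A F x) := by
  have := (meas_BadS_pair φ A F hφm hAm hFm)
  have h2 : BadS φ A F x = Prod.mk x ⁻¹' {p : X × ((ℝ × ℝ) × ℝ × ℝ) | p.2 ∈ BadS φ A F p.1} := rfl
  rw [h2]
  exact this.preimage (measurable_prodMk_left)

lemma meas_GoodP : MeasurableSet {x : X | GoodP φ A F x} := by
  have hm : Measurable fun x : X =>
      (((volume : Measure ℝ).prod volume).prod ((volume : Measure ℝ).prod volume))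
        (Prod.mk x ⁻¹' {p : X × ((ℝ × ℝ) × ℝ × ℝ) | p.2 ∈ BadS φ A F p.1}) :=
    measurable_measure_prodMk_left (meas_BadS_pair φ A F hφm hAm hFm)
  have h2 : {x : X | GoodP φ A F x} = (fun x =>
      (((volume : Measure ℝ).prod volume).prod ((volume : Measure ℝ).prod volume))
        (Prod.mk x ⁻¹' {p : X × ((ℝ × ℝ) × ℝ × ℝ) | p.2 ∈ BadS φ A F p.1})) ⁻¹' {0} := by
    unfold GoodP
    rfl
  rw [h2]
  exact hm (measurableSet_singleton 0)

lemma meas_FF : Measurable (fun p : ℝ × X => FF φ A F p.1 p.2) := by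
  unfold FF
  apply Measurable.sub
  · apply Measurable.add
    · have heq : (fun p : ℝ × X => Set.indicator {y | GoodP φ A F y} (fun y => cor φ A F p.1 y) p.2)
          = Set.indicator {p : ℝ × X | GoodP φ A F p.2} (fun p => cor φ A F p.1 p.2) := by
        funext p
        by_cases h : GoodP φ A F p.2
        · rw [Set.indicator_of_mem (show p.2 ∈ {y | GoodP φ A F y} from h),
            Set.indicator_of_mem (show p ∈ {p : ℝ × X | GoodP φ A F p.2} from h)]
        · rw [Set.indicator_of_notMem (show p.2 ∉ {y | GoodP φ A F y} from h),
            Set.indicator_of_notMem (show p ∉ {p : ℝ × X | GoodP φ A F p.2} from h)]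
      rw [heq]
      exact (meas_cor φ A F hφm hAm hFm).indicator
        ((meas_GoodP φ A F hφm hAm hFm).preimage measurable_snd)
    · exact (meas_MM (F := F) hFm).comp measurable_snd
  · exact hAm.mul ((meas_MM (F := F) hFm).comp hφm)

end Meas

variable (hφ_add : ∀ (t1 t2 : ℝ) (x : X), φ (t1 + t2) x = φ t1 (φ t2 x))
variable (hA_ne : ∀ (t : ℝ) (x : X), A t x ≠ 0)
variable (hA_coc : ∀ (t1 t2 : ℝ) (x : X), A (t1 + t2) x = A t1 x * A t2 (φ t1 x))

include hφ_add hA_coc in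
lemma gam_equiv (t : ℝ) (x : X) (u s : ℝ) :
    gam φ A F x (u + t) (s + t) = A t x * gam φ A F (φ t x) u s := by
  unfold gam
  rw [show s + t - (u + t) = s - u by ring, hφ_add u t x, show u + t = t + u by ring,
    hA_coc t u x, mul_assoc]

include hφm hAm hFm hφ_add hA_ne hA_coc in
lemma Good_inv (t : ℝ) (x : X) : GoodP φ A F (φ t x) ↔ GoodP φ A F x := by
  have hT : MeasurePreserving
      (Prod.map (Prod.map (· + t) (· + t)) (Prod.map (· + t) (· + t)))
      (((volume : Measure ℝ).prod volume).prod ((volume : Measure ℝ).prod volume))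
      (((volume : Measure ℝ).prod volume).prod ((volume : Measure ℝ).prod volume)) :=
    ((measurePreserving_add_right volume t).prod (measurePreserving_add_right volume t)).prod
      ((measurePreserving_add_right volume t).prod (measurePreserving_add_right volume t))
  have hpre : Prod.map (Prod.map (· + t) (· + t)) (Prod.map (· + t) (· + t)) ⁻¹' (BadS φ A F x)
      = BadS φ A F (φ t x) := by
    ext q
    obtain ⟨⟨u, u'⟩, s, s'⟩ := q
    simp only [BadS, Set.mem_preimage, Set.mem_setOf_eq, Prod.map_apply]
    rw [gam_equiv φ A F hφ_add hA_coc t x u s, gam_equiv φ A F hφ_add hA_coc t x u' s,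
      gam_equiv φ A F hφ_add hA_coc t x u s', gam_equiv φ A F hφ_add hA_coc t x u' s',
      ← mul_sub, ← mul_sub]
    exact not_congr (mul_right_inj' (hA_ne t x))
  unfold GoodP
  rw [← hpre, hT.measure_preimage (meas_BadS φ A F hφm hAm hFm x).nullMeasurableSet]

include hφm hAm hFm in
lemma good_ae_dd (x : X) (hx : GoodP φ A F x) :
    ∀ᵐ u ∂(volume : Measure ℝ), ∀ᵐ s ∂(volume : Measure ℝ),
      dd φ A F x u s = ww φ A F x s := by
  have hBmeas := meas_BadS φ A F hφm hAm hFm x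
  have hgx : ∀ u : ℝ, Measurable (gam φ A F x u) := meas_gam_x φ A F hφm hAm hFm x
  have hddx : Measurable (fun q : ℝ × ℝ => dd φ A F x q.1 q.2) :=
    meas_dd_x φ A F hφm hAm hFm x
  have hwx : Measurable (ww φ A F x) := meas_ww_x φ A F hφm hAm hFm x
  unfold GoodP at hx
  -- step 1 : sections of the bad set are null
  have h1 : ∀ᵐ uu' ∂((volume : Measure ℝ).prod volume),
      ((volume : Measure ℝ).prod volume) (Prod.mk uu' ⁻¹' BadS φ A F x) = 0 := by
    have := (Measure.measure_prod_null hBmeas).mp hx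
    filter_upwards [this] with uu' h
    exact h
  -- step 2 : a.e. pair (u,u'), the functions dd x u and dd x u' agree a.e.
  have h2 : ∀ᵐ uu' ∂((volume : Measure ℝ).prod volume),
      (volume : Measure ℝ) {s | dd φ A F x uu'.1 s ≠ dd φ A F x uu'.2 s} = 0 := by
    filter_upwards [h1] with uu' huu'
    have hsec : Prod.mk uu' ⁻¹' BadS φ A F x
        = {p : ℝ × ℝ | gam φ A F x uu'.1 p.1 - gam φ A F x uu'.2 p.1
            ≠ gam φ A F x uu'.1 p.2 - gam φ A F x uu'.2 p.2} := by
      simp only [BadS]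
      rfl
    rw [hsec] at huu'
    obtain ⟨c, hc⟩ := exists_ae_const
      (g := fun s => gam φ A F x uu'.1 s - gam φ A F x uu'.2 s)
      ((hgx uu'.1).sub (hgx uu'.2)) huu'
    have hn : nn φ A F x uu'.1 = nn φ A F x uu'.2 + c := by
      have hae : gam φ A F x uu'.1 =ᵐ[volume] (fun s => gam φ A F x uu'.2 s + c) := by
        filter_upwards [hc] with s hs
        linarith
      have e1 : nn φ A F x uu'.1 = med (gam φ A F x uu'.1) := by rw [nn]
      have e2 : nn φ A F x uu'.2 = med (gam φ A F x uu'.2) := by rw [nn]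
      rw [e1, e2, med_congr hae, med_add_const (hgx uu'.2) c]
    have : ∀ᵐ s ∂(volume : Measure ℝ), dd φ A F x uu'.1 s = dd φ A F x uu'.2 s := by
      filter_upwards [hc] with s hs
      simp only [dd]
      rw [hn]
      linarith
    exact ae_iff.mp this
  -- step 3 : reorganize: for a.e. u', for a.e. u, dd x u ≈ dd x u'
  have hS2meas : MeasurableSet {q : (ℝ × ℝ) × ℝ | dd φ A F x q.1.1 q.2 ≠ dd φ A F x q.1.2 q.2} := by
    refine (measurableSet_eq_fun ?_ ?_).compl
    · exact hddx.comp ((measurable_fst.comp measurable_fst).prodMk measurable_snd)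
    · exact hddx.comp ((measurable_snd.comp measurable_fst).prodMk measurable_snd)
  have hPmeas : MeasurableSet {uu' : ℝ × ℝ |
      (volume : Measure ℝ) {s | dd φ A F x uu'.1 s ≠ dd φ A F x uu'.2 s} ≠ 0} := by
    have hmm : Measurable fun uu' : ℝ × ℝ =>
        (volume : Measure ℝ) (Prod.mk uu' ⁻¹' {q : (ℝ × ℝ) × ℝ |
          dd φ A F x q.1.1 q.2 ≠ dd φ A F x q.1.2 q.2}) :=
      measurable_measure_prodMk_left hS2meas
    exact (hmm (measurableSet_singleton 0)).compl
  have h3 : ((volume : Measure ℝ).prod volume) {uu' : ℝ × ℝ |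
      (volume : Measure ℝ) {s | dd φ A F x uu'.1 s ≠ dd φ A F x uu'.2 s} ≠ 0} = 0 := by
    exact ae_iff.mp h2
  have h4 : ∀ᵐ u' ∂(volume : Measure ℝ), ∀ᵐ u ∂(volume : Measure ℝ),
      (volume : Measure ℝ) {s | dd φ A F x u s ≠ dd φ A F x u' s} = 0 := by
    have := (prod_null_right (volume : Measure ℝ) (volume : Measure ℝ) hPmeas).mp h3
    filter_upwards [this] with u' h
    have : ∀ᵐ u ∂(volume : Measure ℝ), (u, u') ∉ {uu' : ℝ × ℝ |
        (volume : Measure ℝ) {s | dd φ A F x uu'.1 s ≠ dd φ A F x uu'.2 s} ≠ 0} := by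
      rw [ae_iff]
      simpa using h
    filter_upwards [this] with u hu
    simpa using hu
  -- step 4 : the triple set is null
  have hE3meas : MeasurableSet {q : ℝ × ℝ × ℝ |
      dd φ A F x q.2.1 q.2.2 ≠ dd φ A F x q.1 q.2.2} := by
    refine (measurableSet_eq_fun ?_ ?_).compl
    · exact hddx.comp ((measurable_fst.comp measurable_snd).prodMk
        (measurable_snd.comp measurable_snd))
    · exact hddx.comp (measurable_fst.prodMk (measurable_snd.comp measurable_snd))
  have h5 : ((volume : Measure ℝ).prod ((volume : Measure ℝ).prod volume)) {q : ℝ × ℝ × ℝ |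
      dd φ A F x q.2.1 q.2.2 ≠ dd φ A F x q.1 q.2.2} = 0 := by
    rw [Measure.measure_prod_null hE3meas]
    have : ∀ᵐ u' ∂(volume : Measure ℝ),
        ((volume : Measure ℝ).prod volume) {q : ℝ × ℝ |
          dd φ A F x q.1 q.2 ≠ dd φ A F x u' q.2} = 0 := by
      filter_upwards [h4] with u' h
      have hmeas2 : MeasurableSet {q : ℝ × ℝ | dd φ A F x q.1 q.2 ≠ dd φ A F x u' q.2} := by
        refine (measurableSet_eq_fun hddx ?_).compl
        exact hddx.comp (measurable_const.prodMk measurable_snd)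
      rw [Measure.measure_prod_null hmeas2]
      filter_upwards [h] with u hu
      exact hu
    filter_upwards [this] with u' h
    exact h
  -- step 5 : slice the other way and identify the median
  have h6 : ∀ᵐ us ∂((volume : Measure ℝ).prod volume),
      (volume : Measure ℝ) {u' | dd φ A F x us.1 us.2 ≠ dd φ A F x u' us.2} = 0 := by
    exact (prod_null_right (volume : Measure ℝ) ((volume : Measure ℝ).prod volume) hE3meas).mp h5
  have h7 : ∀ᵐ us ∂((volume : Measure ℝ).prod volume),
      dd φ A F x us.1 us.2 = ww φ A F x us.2 := by
    filter_upwards [h6] with us h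
    have hae : ∀ᵐ u' ∂(volume : Measure ℝ), dd φ A F x u' us.2 = dd φ A F x us.1 us.2 := by
      rw [ae_iff]
      have : {u' | ¬ dd φ A F x u' us.2 = dd φ A F x us.1 us.2}
          = {u' | dd φ A F x us.1 us.2 ≠ dd φ A F x u' us.2} :=
        Set.ext fun u' => not_congr eq_comm
      rw [this]
      exact h
    have : ww φ A F x us.2 = dd φ A F x us.1 us.2 := by
      have e : ww φ A F x us.2 = med (fun u => dd φ A F x u us.2) := by rw [ww]
      rw [e]
      exact med_ae_const hae
    exact this.symm
  exact Measure.ae_ae_of_ae_prod h7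

include hφm hAm hFm hφ_add hA_ne hA_coc in
lemma key_ae (t : ℝ) (x : X) (hx : GoodP φ A F x) :
    ∀ᵐ s ∂(volume : Measure ℝ),
      ww φ A F x (s + t) = cor φ A F t x + A t x * ww φ A F (φ t x) s := by
  have hxφ : GoodP φ A F (φ t x) :=
    (Good_inv φ A F hφm hAm hFm hφ_add hA_ne hA_coc t x).mpr hx
  have h3x := good_ae_dd φ A F hφm hAm hFm x hx
  have h3φ := good_ae_dd φ A F hφm hAm hFm (φ t x) hxφ
  have hddx : Measurable (fun q : ℝ × ℝ => dd φ A F x q.1 q.2) :=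
    meas_dd_x φ A F hφm hAm hFm x
  have hwx : Measurable (ww φ A F x) := meas_ww_x φ A F hφm hAm hFm x
  -- the u-section predicate is measurable
  have hUmeas : MeasurableSet {u : ℝ |
      (volume : Measure ℝ) {s | dd φ A F x u s ≠ ww φ A F x s} = 0} := by
    have hSmeas : MeasurableSet {q : ℝ × ℝ | dd φ A F x q.1 q.2 ≠ ww φ A F x q.2} := by
      refine (measurableSet_eq_fun hddx (hwx.comp measurable_snd)).compl
    have hmm : Measurable fun u : ℝ => (volume : Measure ℝ)
        (Prod.mk u ⁻¹' {q : ℝ × ℝ | dd φ A F x q.1 q.2 ≠ ww φ A F x q.2}) :=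
      measurable_measure_prodMk_left hSmeas
    exact hmm (measurableSet_singleton 0)
  have htr : ∀ᵐ u ∂(volume : Measure ℝ), ∀ᵐ s ∂(volume : Measure ℝ),
      dd φ A F x (u + t) s = ww φ A F x s := by
    have h' : ∀ᵐ u ∂(volume : Measure ℝ),
        (volume : Measure ℝ) {s | dd φ A F x u s ≠ ww φ A F x s} = 0 := by
      filter_upwards [h3x] with u hu
      exact ae_iff.mp hu
    have := ae_shift (p := fun u => (volume : Measure ℝ)
      {s | dd φ A F x u s ≠ ww φ A F x s} = 0) hUmeas t h'
    filter_upwards [this] with u hu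
    rw [ae_iff]
    exact hu
  obtain ⟨u₀, hu1, hu2⟩ := (htr.and h3φ).exists
  -- shift hu1 in s by t
  have hs1meas : MeasurableSet {σ : ℝ | dd φ A F x (u₀ + t) σ = ww φ A F x σ} :=
    measurableSet_eq_fun (hddx.comp (measurable_const.prodMk measurable_id)) hwx
  have hs1 : ∀ᵐ s ∂(volume : Measure ℝ),
      dd φ A F x (u₀ + t) (s + t) = ww φ A F x (s + t) :=
    ae_shift (p := fun σ => dd φ A F x (u₀ + t) σ = ww φ A F x σ) hs1meas t hu1
  have key : ∀ᵐ s ∂(volume : Measure ℝ), ww φ A F x (s + t)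
      = A t x * ww φ A F (φ t x) s
        + (A t x * nn φ A F (φ t x) u₀ - nn φ A F x (u₀ + t)) := by
    filter_upwards [hs1, hu2] with s h1 h2
    have e1 : dd φ A F x (u₀ + t) (s + t)
        = A t x * gam φ A F (φ t x) u₀ s - nn φ A F x (u₀ + t) := by
      simp only [dd]
      rw [gam_equiv φ A F hφ_add hA_coc t x u₀ s]
    have e2 : gam φ A F (φ t x) u₀ s = ww φ A F (φ t x) s + nn φ A F (φ t x) u₀ := by
      simp only [dd] at h2
      linarith
    rw [← h1, e1, e2]
    ring
  have hcor : cor φ A F t x = A t x * nn φ A F (φ t x) u₀ - nn φ A F x (u₀ + t) := by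
    have e : cor φ A F t x
        = med (fun s => ww φ A F x (s + t) - A t x * ww φ A F (φ t x) s) := by rw [cor]
    rw [e]
    apply med_ae_const
    filter_upwards [key] with s hs
    rw [hs]
    ring
  filter_upwards [key] with s hs
  rw [hs, hcor]
  ring

include hφm hAm hFm hφ_add hA_ne hA_coc in
lemma cor_add (t1 t2 : ℝ) (x : X) (hx : GoodP φ A F x) :
    cor φ A F (t1 + t2) x = cor φ A F t1 x + A t1 x * cor φ A F t2 (φ t1 x) := by
  have hxφ1 : GoodP φ A F (φ t1 x) :=
    (Good_inv φ A F hφm hAm hFm hφ_add hA_ne hA_coc t1 x).mpr hx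
  have e1 := key_ae φ A F hφm hAm hFm hφ_add hA_ne hA_coc (t1 + t2) x hx
  have e2 := key_ae φ A F hφm hAm hFm hφ_add hA_ne hA_coc t1 x hx
  have e3 := key_ae φ A F hφm hAm hFm hφ_add hA_ne hA_coc t2 (φ t1 x) hxφ1
  -- shift e2 in s by t2
  have hmeas : MeasurableSet {s : ℝ |
      ww φ A F x (s + t1) = cor φ A F t1 x + A t1 x * ww φ A F (φ t1 x) s} := by
    refine measurableSet_eq_fun ?_ ?_
    · exact (meas_ww_x φ A F hφm hAm hFm x).comp (measurable_id.add measurable_const)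
    · exact measurable_const.add
        (measurable_const.mul (meas_ww_x φ A F hφm hAm hFm (φ t1 x)))
  have e2' : ∀ᵐ s ∂(volume : Measure ℝ),
      ww φ A F x (s + t2 + t1) = cor φ A F t1 x + A t1 x * ww φ A F (φ t1 x) (s + t2) :=
    ae_shift (p := fun s => ww φ A F x (s + t1)
      = cor φ A F t1 x + A t1 x * ww φ A F (φ t1 x) s) hmeas t2 e2
  have hφeq : φ t2 (φ t1 x) = φ (t1 + t2) x := by
    rw [show t1 + t2 = t2 + t1 by ring, hφ_add t2 t1 x]
  have hcomb : ∀ᵐ s ∂(volume : Measure ℝ),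
      cor φ A F (t1 + t2) x + (A t1 x * A t2 (φ t1 x)) * ww φ A F (φ (t1 + t2) x) s
      = (cor φ A F t1 x + A t1 x * cor φ A F t2 (φ t1 x))
        + (A t1 x * A t2 (φ t1 x)) * ww φ A F (φ (t1 + t2) x) s := by
    filter_upwards [e1, e2', e3] with s h1 h2 h3
    have hs1 : s + t2 + t1 = s + (t1 + t2) := by ring
    rw [hs1] at h2
    rw [h3, hφeq] at h2
    rw [hA_coc t1 t2 x] at h1
    rw [h1] at h2
    linarith
  obtain ⟨s, hs⟩ := hcomb.exists
  have := add_right_cancel hs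
  linarith

include hφm hAm hFm hφ_add hA_ne hA_coc in
lemma FF_add (t1 t2 : ℝ) (x : X) :
    FF φ A F (t1 + t2) x = FF φ A F t1 x + A t1 x * FF φ A F t2 (φ t1 x) := by
  have hφeq : φ t2 (φ t1 x) = φ (t1 + t2) x := by
    rw [show t1 + t2 = t2 + t1 by ring, hφ_add t2 t1 x]
  have hffe : ∀ (t : ℝ) (y : X), FF φ A F t y
      = Set.indicator {y | GoodP φ A F y} (fun y => cor φ A F t y) y
        + MM F y - A t y * MM F (φ t y) := fun t y => by rw [FF]
  by_cases hx : GoodP φ A F x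
  · have hx1 : GoodP φ A F (φ t1 x) :=
      (Good_inv φ A F hφm hAm hFm hφ_add hA_ne hA_coc t1 x).mpr hx
    rw [hffe (t1 + t2) x, hffe t1 x, hffe t2 (φ t1 x),
      Set.indicator_of_mem (show x ∈ {y | GoodP φ A F y} from hx)
        (fun y => cor φ A F (t1 + t2) y),
      Set.indicator_of_mem (show x ∈ {y | GoodP φ A F y} from hx)
        (fun y => cor φ A F t1 y),
      Set.indicator_of_mem (show φ t1 x ∈ {y | GoodP φ A F y} from hx1)
        (fun y => cor φ A F t2 y),
      cor_add φ A F hφm hAm hFm hφ_add hA_ne hA_coc t1 t2 x hx,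
      hA_coc t1 t2 x, hφeq]
    ring
  · have hx1 : ¬ GoodP φ A F (φ t1 x) := fun h =>
      hx ((Good_inv φ A F hφm hAm hFm hφ_add hA_ne hA_coc t1 x).mp h)
    rw [hffe (t1 + t2) x, hffe t1 x, hffe t2 (φ t1 x),
      Set.indicator_of_notMem (show x ∉ {y | GoodP φ A F y} from hx)
        (fun y => cor φ A F (t1 + t2) y),
      Set.indicator_of_notMem (show x ∉ {y | GoodP φ A F y} from hx)
        (fun y => cor φ A F t1 y),
      Set.indicator_of_notMem (show φ t1 x ∉ {y | GoodP φ A F y} from hx1)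
        (fun y => cor φ A F t2 y),
      hA_coc t1 t2 x, hφeq]
    ring

end Main

end Stmt1H

open Stmt1H

/-- An almost semi-additive functional related to a jointly measurable
cocycle `A` (values in `ℝ∖{0}`) and a measurable nonsingular flow `φ` on a standard
Lebesgue space has a version which is a (jointly measurable, everywhere) semi-additive
functional related to `A`. -/
theorem stmt1 {X : Type*} [MeasurableSpace X] [StandardBorelSpace X]
    (μ : Measure X) [SigmaFinite μ]
    (φ : ℝ → X → X)
    (hφ_add : ∀ (t1 t2 : ℝ) (x : X), φ (t1 + t2) x = φ t1 (φ t2 x))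
    (hφ_zero : ∀ x : X, φ 0 x = x)
    (hφ_meas : Measurable (fun p : ℝ × X => φ p.1 p.2))
    (hφ_ns : ∀ (t : ℝ) (s : Set X), MeasurableSet s → μ s = 0 → μ (φ t ⁻¹' s) = 0)
    (A : ℝ → X → ℝ)
    (hA_meas : Measurable (fun p : ℝ × X => A p.1 p.2))
    (hA_ne : ∀ (t : ℝ) (x : X), A t x ≠ 0)
    (hA : ∀ (t1 t2 : ℝ) (x : X), A (t1 + t2) x = A t1 x * A t2 (φ t1 x))
    (F : ℝ → X → ℝ)
    (hF_meas : Measurable (fun p : ℝ × X => F p.1 p.2))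
    (hF : ∀ t1 t2 : ℝ, ∀ᵐ x ∂μ, F (t1 + t2) x = F t1 x + A t1 x * F t2 (φ t1 x)) :
    ∃ F' : ℝ → X → ℝ,
      (∀ t : ℝ, F t =ᵐ[μ] F' t) ∧
      Measurable (fun p : ℝ × X => F' p.1 p.2) ∧
      ∀ (t1 t2 : ℝ) (x : X), F' (t1 + t2) x = F' t1 x + A t1 x * F' t2 (φ t1 x) := by
  classical
  have hφt : ∀ t : ℝ, Measurable (φ t) := fun t =>
    hφ_meas.comp (measurable_const.prodMk measurable_id)
  have hAt : ∀ t : ℝ, Measurable (fun x => A t x) := fun t =>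
    hA_meas.comp (measurable_const.prodMk measurable_id)
  have hFt : ∀ t : ℝ, Measurable (fun x => F t x) := fun t =>
    hF_meas.comp (measurable_const.prodMk measurable_id)
  have hFx : ∀ x : X, Measurable (fun s => F s x) := fun x =>
    hF_meas.comp (measurable_id.prodMk measurable_const)
  refine ⟨FF φ A F, ?_, meas_FF φ A F hφ_meas hA_meas hF_meas,
    fun t1 t2 x => FF_add φ A F hφ_meas hA_meas hF_meas hφ_add hA_ne hA t1 t2 x⟩
  -- the version property
  -- K1 : a.e. x, a.e. (u,s), gam x u s = F s x - F u x
  have hK1Smeas : MeasurableSet {p : X × ℝ × ℝ |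
      gam φ A F p.1 p.2.1 p.2.2 ≠ F p.2.2 p.1 - F p.2.1 p.1} := by
    refine (measurableSet_eq_fun (meas_gam φ A F hφ_meas hA_meas hF_meas) ?_).compl
    exact (hF_meas.comp ((measurable_snd.comp measurable_snd).prodMk measurable_fst)).sub
      (hF_meas.comp ((measurable_fst.comp measurable_snd).prodMk measurable_fst))
  have hK1null : (μ.prod ((volume : Measure ℝ).prod volume)) {p : X × ℝ × ℝ |
      gam φ A F p.1 p.2.1 p.2.2 ≠ F p.2.2 p.1 - F p.2.1 p.1} = 0 := by
    rw [prod_null_right μ ((volume : Measure ℝ).prod volume) hK1Smeas]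
    refine Filter.Eventually.of_forall (fun us => ?_)
    have h0 := hF us.1 (us.2 - us.1)
    have hxe : ∀ᵐ x ∂μ, gam φ A F x us.1 us.2 = F us.2 x - F us.1 x := by
      filter_upwards [h0] with x hx
      rw [show us.1 + (us.2 - us.1) = us.2 by ring] at hx
      have eg : gam φ A F x us.1 us.2 = A us.1 x * F (us.2 - us.1) (φ us.1 x) := by rw [gam]
      rw [eg]
      linarith
    exact ae_iff.mp hxe
  have hK1 : ∀ᵐ x ∂μ, ∀ᵐ us ∂((volume : Measure ℝ).prod volume),
      gam φ A F x us.1 us.2 = F us.2 x - F us.1 x := by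
    have := (Measure.measure_prod_null hK1Smeas).mp hK1null
    filter_upwards [this] with x hx
    rw [ae_iff]
    exact hx
  -- the good full measure set W
  have hWsub : MeasurableSet {p : X × ℝ | ww φ A F p.1 p.2 ≠ F p.2 p.1 - MM F p.1} := by
    refine (measurableSet_eq_fun (meas_ww φ A F hφ_meas hA_meas hF_meas) ?_).compl
    exact (hF_meas.comp (measurable_snd.prodMk measurable_fst)).sub
      ((meas_MM (F := F) hF_meas).comp measurable_fst)
  have hWMeas : MeasurableSet {x : X | GoodP φ A F x ∧
      (volume : Measure ℝ) {s | ww φ A F x s ≠ F s x - MM F x} = 0} := by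
    refine (meas_GoodP φ A F hφ_meas hA_meas hF_meas).inter ?_
    exact (measurable_measure_prodMk_left hWsub) (measurableSet_singleton 0)
  have hWae : ∀ᵐ x ∂μ, GoodP φ A F x ∧
      (volume : Measure ℝ) {s | ww φ A F x s ≠ F s x - MM F x} = 0 := by
    filter_upwards [hK1] with x hx
    have hU : ∀ᵐ u ∂(volume : Measure ℝ), (volume : Measure ℝ)
        {s | gam φ A F x u s ≠ F s x - F u x} = 0 := by
      have := Measure.ae_ae_of_ae_prod hx
      filter_upwards [this] with u hu
      exact ae_iff.mp hu
    have hUc : (volume : Measure ℝ) {u | ¬ (volume : Measure ℝ)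
        {s | gam φ A F x u s ≠ F s x - F u x} = 0} = 0 := ae_iff.mp hU
    have hpair : ∀ᵐ uu' ∂((volume : Measure ℝ).prod volume),
        ((volume : Measure ℝ) {s | gam φ A F x uu'.1 s ≠ F s x - F uu'.1 x} = 0) ∧
        ((volume : Measure ℝ) {s | gam φ A F x uu'.2 s ≠ F s x - F uu'.2 x} = 0) := by
      rw [ae_iff]
      apply measure_mono_null (t :=
        (({u | ¬ (volume : Measure ℝ) {s | gam φ A F x u s ≠ F s x - F u x} = 0}) ×ˢ
          (Set.univ : Set ℝ)) ∪
        ((Set.univ : Set ℝ) ×ˢ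
          ({u | ¬ (volume : Measure ℝ) {s | gam φ A F x u s ≠ F s x - F u x} = 0})))
      · intro p hp
        simp only [Set.mem_setOf_eq] at hp
        by_cases h1 : (volume : Measure ℝ) {s | gam φ A F x p.1 s ≠ F s x - F p.1 x} = 0
        · right
          refine ⟨Set.mem_univ _, ?_⟩
          simp only [Set.mem_setOf_eq]
          intro h2
          exact hp ⟨h1, h2⟩
        · left
          exact ⟨h1, Set.mem_univ _⟩
      · refine measure_union_null ?_ ?_
        · rw [Measure.prod_prod, hUc, zero_mul]
        · rw [Measure.prod_prod, hUc, mul_zero]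
    have hGood : GoodP φ A F x := by
      unfold GoodP
      rw [Measure.measure_prod_null (meas_BadS φ A F hφ_meas hA_meas hF_meas x)]
      filter_upwards [hpair] with uu' huu'
      obtain ⟨h1, h2⟩ := huu'
      have h1' : ∀ᵐ s ∂(volume : Measure ℝ),
          gam φ A F x uu'.1 s = F s x - F uu'.1 x := by rw [ae_iff]; exact h1
      have h2' : ∀ᵐ s ∂(volume : Measure ℝ),
          gam φ A F x uu'.2 s = F s x - F uu'.2 x := by rw [ae_iff]; exact h2
      have hgc : ∀ᵐ s ∂(volume : Measure ℝ),
          gam φ A F x uu'.1 s - gam φ A F x uu'.2 s = F uu'.2 x - F uu'.1 x := by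
        filter_upwards [h1', h2'] with s e1 e2
        rw [e1, e2]
        ring
      have hN : (volume : Measure ℝ) {s | ¬ (gam φ A F x uu'.1 s - gam φ A F x uu'.2 s
          = F uu'.2 x - F uu'.1 x)} = 0 := ae_iff.mp hgc
      have hsec : Prod.mk uu' ⁻¹' BadS φ A F x = {p : ℝ × ℝ |
          gam φ A F x uu'.1 p.1 - gam φ A F x uu'.2 p.1
          ≠ gam φ A F x uu'.1 p.2 - gam φ A F x uu'.2 p.2} := by
        simp only [BadS]
        rfl
      show ((volume : Measure ℝ).prod volume) (Prod.mk uu' ⁻¹' BadS φ A F x) = 0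
      rw [hsec]
      apply measure_mono_null (t :=
        (({s : ℝ | ¬ (gam φ A F x uu'.1 s - gam φ A F x uu'.2 s = F uu'.2 x - F uu'.1 x)}) ×ˢ
          (Set.univ : Set ℝ)) ∪
        ((Set.univ : Set ℝ) ×ˢ
          ({s : ℝ | ¬ (gam φ A F x uu'.1 s - gam φ A F x uu'.2 s = F uu'.2 x - F uu'.1 x)})))
      · intro p hp
        simp only [Set.mem_setOf_eq] at hp
        by_cases hc1 : gam φ A F x uu'.1 p.1 - gam φ A F x uu'.2 p.1
            = F uu'.2 x - F uu'.1 x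
        · right
          refine ⟨Set.mem_univ _, ?_⟩
          simp only [Set.mem_setOf_eq]
          intro hc2
          exact hp (by rw [hc1, hc2])
        · left
          exact ⟨hc1, Set.mem_univ _⟩
      · refine measure_union_null ?_ ?_
        · rw [Measure.prod_prod, hN, zero_mul]
        · rw [Measure.prod_prod, hN, mul_zero]
    have h3 := good_ae_dd φ A F hφ_meas hA_meas hF_meas x hGood
    have hUae : ∀ᵐ u ∂(volume : Measure ℝ), ∀ᵐ s ∂(volume : Measure ℝ),
        gam φ A F x u s = F s x - F u x := Measure.ae_ae_of_ae_prod hx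
    obtain ⟨u₀, hg0, hd0⟩ := (hUae.and h3).exists
    have hnn : nn φ A F x u₀ = MM F x + (- F u₀ x) := by
      have e : nn φ A F x u₀ = med (gam φ A F x u₀) := by rw [nn]
      have eM : MM F x = med (fun s => F s x) := by rw [MM]
      have hae : gam φ A F x u₀ =ᵐ[(volume : Measure ℝ)] (fun s => F s x + (- F u₀ x)) := by
        filter_upwards [hg0] with s hs
        rw [hs]
        ring
      rw [e, eM, med_congr hae, med_add_const (hFx x) (- F u₀ x)]
    have hwweq : ∀ᵐ s ∂(volume : Measure ℝ), ww φ A F x s = F s x - MM F x := by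
      filter_upwards [hg0, hd0] with s e1 e2
      have ed : dd φ A F x u₀ s = gam φ A F x u₀ s - nn φ A F x u₀ := by rw [dd]
      rw [← e2, ed, e1, hnn]
      ring
    exact ⟨hGood, ae_iff.mp hwweq⟩
  -- now fix t and conclude
  intro t
  have hWc : μ {x : X | GoodP φ A F x ∧
      (volume : Measure ℝ) {s | ww φ A F x s ≠ F s x - MM F x} = 0}ᶜ = 0 := by
    rw [Set.compl_setOf]
    exact ae_iff.mp hWae
  have hφW : ∀ᵐ x ∂μ, GoodP φ A F (φ t x) ∧
      (volume : Measure ℝ) {s | ww φ A F (φ t x) s ≠ F s (φ t x) - MM F (φ t x)} = 0 := by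
    have h0 := hφ_ns t _ hWMeas.compl hWc
    rw [ae_iff]
    have : {x : X | ¬ (GoodP φ A F (φ t x) ∧
        (volume : Measure ℝ) {s | ww φ A F (φ t x) s ≠ F s (φ t x) - MM F (φ t x)} = 0)}
        = φ t ⁻¹' ({x : X | GoodP φ A F x ∧
        (volume : Measure ℝ) {s | ww φ A F x s ≠ F s x - MM F x} = 0}ᶜ) := by
      rw [Set.compl_setOf]
      rfl
    rw [this]
    exact h0
  have hK2Smeas : MeasurableSet {p : X × ℝ |
      F (p.2 + t) p.1 ≠ F t p.1 + A t p.1 * F p.2 (φ t p.1)} := by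
    refine (measurableSet_eq_fun ?_ ?_).compl
    · exact hF_meas.comp ((measurable_snd.add measurable_const).prodMk measurable_fst)
    · exact ((hFt t).comp measurable_fst).add (((hAt t).comp measurable_fst).mul
        (hF_meas.comp (measurable_snd.prodMk ((hφt t).comp measurable_fst))))
  have hK2null : (μ.prod (volume : Measure ℝ)) {p : X × ℝ |
      F (p.2 + t) p.1 ≠ F t p.1 + A t p.1 * F p.2 (φ t p.1)} = 0 := by
    rw [prod_null_right μ (volume : Measure ℝ) hK2Smeas]
    refine Filter.Eventually.of_forall (fun s => ?_)
    have h0 := hF t s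
    have hxe : ∀ᵐ x ∂μ, F (s + t) x = F t x + A t x * F s (φ t x) := by
      filter_upwards [h0] with x hx
      rw [show s + t = t + s by ring]
      exact hx
    exact ae_iff.mp hxe
  have hK2 : ∀ᵐ x ∂μ, ∀ᵐ s ∂(volume : Measure ℝ),
      F (s + t) x = F t x + A t x * F s (φ t x) := by
    have := (Measure.measure_prod_null hK2Smeas).mp hK2null
    filter_upwards [this] with x hx
    rw [ae_iff]
    exact hx
  filter_upwards [hWae, hφW, hK2] with x hxW hφxW hK2x
  obtain ⟨hxG, hxw⟩ := hxW
  obtain ⟨hφG, hφw⟩ := hφxW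
  have hxw' : ∀ᵐ s ∂(volume : Measure ℝ), ww φ A F x s = F s x - MM F x := by
    rw [ae_iff]
    exact hxw
  have hφw' : ∀ᵐ s ∂(volume : Measure ℝ),
      ww φ A F (φ t x) s = F s (φ t x) - MM F (φ t x) := by
    rw [ae_iff]
    exact hφw
  have hmeas : MeasurableSet {s : ℝ | ww φ A F x s = F s x - MM F x} :=
    measurableSet_eq_fun (meas_ww_x φ A F hφ_meas hA_meas hF_meas x)
      ((hFx x).sub measurable_const)
  have hxwt := ae_shift (p := fun s => ww φ A F x s = F s x - MM F x) hmeas t hxw'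
  have hcor : cor φ A F t x = F t x - MM F x + A t x * MM F (φ t x) := by
    have e : cor φ A F t x
        = med (fun s => ww φ A F x (s + t) - A t x * ww φ A F (φ t x) s) := by rw [cor]
    rw [e]
    apply med_ae_const
    filter_upwards [hxwt, hφw', hK2x] with s e1 e2 e3
    rw [e1, e2, e3]
    ring
  have hFFval : FF φ A F t x = cor φ A F t x + MM F x - A t x * MM F (φ t x) := by
    have e : FF φ A F t x = Set.indicator {y | GoodP φ A F y} (fun y => cor φ A F t y) x
        + MM F x - A t x * MM F (φ t x) := by rw [FF]
    rw [e, Set.indicator_of_mem (show x ∈ {y | GoodP φ A F y} from hxG)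
      (fun y => cor φ A F t y)]
  rw [hFFval, hcor]
  ring
end
end

section
/- Let (X, 𝒳, μ) be a standard Lebesgue space, {ψ_c}_{c>0} a measurable nonsingular multiplicative flow on X, {B_c}_{c>0} a jointly measurable cocycle for the flow taking values in ℝ∖{0}, and {J_c}_{c>0} an almost semi-additive functional related to the cocycle {B_c}. Then {J_c}_{c>0} has a version {J̃_c}_{c>0} which is a semi-additive functional related to the cocycle {B_c}, i.e. J̃_{c1c2}(x) = J̃_{c1}(x) + B_{c1}(x) J̃_{c2}(ψ_{c1}(x)) holds for all c1, c2 > 0 and all x ∈ X. -/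
open MeasureTheory Set Filter
open scoped ENNReal

set_option linter.unusedSectionVars false
set_option linter.unusedVariables false
set_option maxHeartbeats 1000000

namespace S2

/-- Reference probability measure on `(0,∞)`: `e^{-s} ds` on `Ioi 0`. -/
noncomputable def nu : Measure ℝ :=
  (volume.restrict (Set.Ioi (0:ℝ))).withDensity (fun s => ENNReal.ofReal (Real.exp (-s)))

lemma nu_apply {A : Set ℝ} (hA : MeasurableSet A) :
    nu A = ∫⁻ s in A ∩ Set.Ioi 0, ENNReal.ofReal (Real.exp (-s)) := by
  rw [nu, withDensity_apply _ hA, Measure.restrict_restrict hA]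

instance : IsProbabilityMeasure nu := by
  constructor
  rw [nu_apply MeasurableSet.univ, Set.univ_inter]
  rw [← ofReal_integral_eq_lintegral_ofReal]
  · rw [integral_exp_neg_Ioi_zero, ENNReal.ofReal_one]
  · exact (by simpa using exp_neg_integrableOn_Ioi 0 one_pos : IntegrableOn (fun x => Real.exp (-x)) (Ioi 0) volume)
  · exact ae_of_all _ fun s => (Real.exp_pos _).le

lemma nu_null_iff {A : Set ℝ} (hA : MeasurableSet A) :
    nu A = 0 ↔ volume (A ∩ Set.Ioi 0) = 0 := by
  rw [nu_apply hA]
  constructor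
  · intro h
    rw [lintegral_eq_zero_iff (Measurable.ennreal_ofReal (by fun_prop))] at h
    have : ∀ᵐ s ∂(volume.restrict (A ∩ Set.Ioi 0)), False := by
      filter_upwards [h] with s hs
      simp only [Pi.zero_apply, ENNReal.ofReal_eq_zero] at hs
      exact absurd hs (not_le.mpr (Real.exp_pos _))
    simpa using this
  · intro h
    rw [show volume.restrict (A ∩ Set.Ioi 0) = 0 from Measure.restrict_eq_zero.mpr h]
    exact lintegral_zero_measure _

lemma nu_ae_pos : ∀ᵐ s ∂nu, 0 < s := by
  rw [ae_iff]
  rw [nu_null_iff]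
  · convert measure_empty (μ := volume)
    ext s; simp only [Set.mem_inter_iff, Set.mem_setOf_eq, Set.mem_Ioi, Set.mem_empty_iff_false,
      iff_false]
    tauto
  · exact (measurableSet_lt measurable_const measurable_id).compl

lemma nu_scale_null {A : Set ℝ} (hA : MeasurableSet A) {a : ℝ} (ha : 0 < a)
    (h : nu A = 0) : nu ((fun s => a * s) ⁻¹' A) = 0 := by
  rw [nu_null_iff hA] at h
  rw [nu_null_iff (hA.preimage (measurable_const_mul a))]
  have hsub : ((fun s => a * s) ⁻¹' A) ∩ Set.Ioi 0 ⊆ (fun s => a * s) ⁻¹' (A ∩ Set.Ioi 0) := by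
    intro s hs
    exact ⟨hs.1, mul_pos ha hs.2⟩
  refine measure_mono_null hsub ?_
  have hmap := Real.map_volume_mul_left (a := a) ha.ne'
  have heq : volume ((fun s => a * s) ⁻¹' (A ∩ Set.Ioi 0))
      = (Measure.map (fun s => a * s) volume) (A ∩ Set.Ioi 0) := by
    rw [Measure.map_apply (measurable_const_mul a) (hA.inter measurableSet_Ioi)]
  rw [heq, hmap, Measure.smul_apply, h, smul_zero]

lemma nu_scale_ae {P : ℝ → Prop} (hP : MeasurableSet {s | P s}) {a : ℝ} (ha : 0 < a)
    (h : ∀ᵐ s ∂nu, P s) : ∀ᵐ s ∂nu, P (a * s) := by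
  rw [ae_iff] at h ⊢
  exact nu_scale_null (A := {s | ¬ P s}) (show MeasurableSet {s | P s}ᶜ from hP.compl) ha h


/-- Measurability of the set where a parametric a.e. statement holds. -/
lemma measurableSet_ae {α β : Type*} [MeasurableSpace α] [MeasurableSpace β]
    {ν : Measure β} [SFinite ν] {P : α → β → Prop}
    (hP : MeasurableSet {z : α × β | P z.1 z.2}) :
    MeasurableSet {a | ∀ᵐ y ∂ν, P a y} := by
  have h1 : Measurable fun a => ν (Prod.mk a ⁻¹' {z : α × β | ¬ P z.1 z.2}) :=
    measurable_measure_prodMk_left (show MeasurableSet {z : α × β | ¬ P z.1 z.2} by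
      rw [show {z : α × β | ¬ P z.1 z.2} = {z : α × β | P z.1 z.2}ᶜ from (Set.compl_setOf _).symm]
      exact hP.compl)
  have h2 : {a | ∀ᵐ y ∂ν, P a y}
      = (fun a => ν (Prod.mk a ⁻¹' {z : α × β | ¬ P z.1 z.2})) ⁻¹' {0} := by
    ext a
    simp only [Set.mem_setOf_eq, Set.mem_preimage, Set.mem_singleton_iff]
    rw [ae_iff]
    rfl
  rw [h2]
  exact h1 (measurableSet_singleton 0)


lemma nu_scale_ae2 {P : ℝ → ℝ → Prop} (hP : MeasurableSet {z : ℝ × ℝ | P z.1 z.2})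
    {a b : ℝ} (ha : 0 < a) (hb : 0 < b)
    (h : ∀ᵐ z ∂(nu.prod nu), P z.1 z.2) : ∀ᵐ z ∂(nu.prod nu), P (a * z.1) (b * z.2) := by
  rw [Measure.ae_prod_iff_ae_ae hP] at h
  have hP' : MeasurableSet {z : ℝ × ℝ | P (a * z.1) (b * z.2)} :=
    hP.preimage (((measurable_const_mul a).comp measurable_fst).prodMk
      ((measurable_const_mul b).comp measurable_snd))
  rw [Measure.ae_prod_iff_ae_ae hP']
  have hQ : MeasurableSet {s : ℝ | ∀ᵐ v ∂nu, P s v} := measurableSet_ae hP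
  have houter := nu_scale_ae hQ ha h
  filter_upwards [houter] with s hs
  have hinner : MeasurableSet {v : ℝ | P (a * s) v} := hP.preimage measurable_prodMk_left
  exact nu_scale_ae hinner hb hs

lemma nu_scale_ae3 {P : ℝ → ℝ → ℝ → Prop}
    (hP : MeasurableSet {z : ℝ × ℝ × ℝ | P z.1 z.2.1 z.2.2})
    {a b c : ℝ} (ha : 0 < a) (hb : 0 < b) (hc : 0 < c)
    (h : ∀ᵐ z ∂(nu.prod (nu.prod nu)), P z.1 z.2.1 z.2.2) :
    ∀ᵐ z ∂(nu.prod (nu.prod nu)), P (a * z.1) (b * z.2.1) (c * z.2.2) := by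
  rw [Measure.ae_prod_iff_ae_ae hP] at h
  have hP' : MeasurableSet {z : ℝ × ℝ × ℝ | P (a * z.1) (b * z.2.1) (c * z.2.2)} :=
    hP.preimage (((measurable_const_mul a).comp measurable_fst).prodMk
      ((((measurable_const_mul b).comp (measurable_fst.comp measurable_snd))).prodMk
        ((measurable_const_mul c).comp (measurable_snd.comp measurable_snd))))
  rw [Measure.ae_prod_iff_ae_ae hP']
  have hQ : MeasurableSet {s : ℝ | ∀ᵐ w ∂(nu.prod nu), P s w.1 w.2} := by
    refine measurableSet_ae (ν := nu.prod nu) (P := fun s (w : ℝ × ℝ) => P s w.1 w.2) ?_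
    exact hP.preimage (measurable_fst.prodMk
      ((measurable_fst.comp measurable_snd).prodMk (measurable_snd.comp measurable_snd)))
  have houter := nu_scale_ae hQ ha h
  filter_upwards [houter] with s hs
  have hP'' : MeasurableSet {w : ℝ × ℝ | P (a * s) w.1 w.2} :=
    hP.preimage (measurable_prodMk_left)
  exact nu_scale_ae2 hP'' hb hc hs


section medsec

/-- A median-type functional: translation-equivariant, a.e.-class invariant. -/
noncomputable def med (ν : Measure ℝ) (f : ℝ → ℝ) : ℝ :=
  sInf {q : ℝ | 2⁻¹ ≤ ν {v | f v ≤ q}}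

variable {ν : Measure ℝ} [IsProbabilityMeasure ν]

lemma medSet_up {f : ℝ → ℝ} {q q' : ℝ} (hq : 2⁻¹ ≤ ν {v | f v ≤ q}) (h : q ≤ q') :
    2⁻¹ ≤ ν {v | f v ≤ q'} :=
  le_trans hq (measure_mono fun v hv => le_trans hv h)

lemma medSet_nonempty (f : ℝ → ℝ) : {q : ℝ | 2⁻¹ ≤ ν {v | f v ≤ q}}.Nonempty := by
  by_contra hne
  rw [Set.not_nonempty_iff_eq_empty] at hne
  have hU : (⋃ n : ℕ, {v | f v ≤ (n:ℝ)}) = Set.univ := by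
    ext v
    simp only [Set.mem_iUnion, Set.mem_univ, iff_true, Set.mem_setOf_eq]
    exact exists_nat_ge (f v)
  have hmono : Monotone (fun n : ℕ => {v | f v ≤ (n:ℝ)}) := by
    intro n m hnm v hv
    simp only [Set.mem_setOf_eq] at hv ⊢
    exact le_trans hv (Nat.cast_le.mpr hnm)
  have htend := tendsto_measure_iUnion_atTop (μ := ν) hmono
  rw [hU, measure_univ] at htend
  have hlt : ∀ n : ℕ, ν {v | f v ≤ (n:ℝ)} ≤ 2⁻¹ := by
    intro n
    have hmem : ((n:ℝ)) ∉ ({q : ℝ | 2⁻¹ ≤ ν {v | f v ≤ q}}) := by rw [hne]; simp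
    simp only [Set.mem_setOf_eq, not_le] at hmem
    exact hmem.le
  have h1 : (1:ℝ≥0∞) ≤ 2⁻¹ := le_of_tendsto' htend fun n => hlt n
  have : (2⁻¹ : ℝ≥0∞) < 1 := ENNReal.inv_lt_one.mpr ENNReal.one_lt_two
  exact absurd h1 (not_le.mpr this)

lemma medSet_bddBelow {f : ℝ → ℝ} (hf : Measurable f) :
    BddBelow {q : ℝ | 2⁻¹ ≤ ν {v | f v ≤ q}} := by
  have hI : (⋂ n : ℕ, {v | f v ≤ -(n:ℝ)}) = ∅ := by
    ext v
    simp only [Set.mem_iInter, Set.mem_setOf_eq, Set.mem_empty_iff_false, iff_false, not_forall]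
    obtain ⟨n, hn⟩ := exists_nat_gt (-(f v))
    exact ⟨n, by push_neg; linarith⟩
  have hanti : Antitone (fun n : ℕ => {v : ℝ | f v ≤ -(n:ℝ)}) := by
    intro n m hnm v hv
    simp only [Set.mem_setOf_eq] at hv ⊢
    refine le_trans hv (neg_le_neg (Nat.cast_le.mpr hnm))
  have htend := tendsto_measure_iInter_atTop (μ := ν) (s := fun n : ℕ => {v : ℝ | f v ≤ -(n:ℝ)})
    (fun n => ((hf measurableSet_Iic).nullMeasurableSet : NullMeasurableSet {v | f v ≤ -(n:ℝ)} ν))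
    hanti ⟨0, measure_ne_top _ _⟩
  rw [hI, measure_empty] at htend
  have : ∀ᶠ n : ℕ in atTop, ν {v | f v ≤ -(n:ℝ)} < 2⁻¹ := by
    refine htend.eventually_lt_const ?_
    simp
  obtain ⟨n, hn⟩ := this.exists
  refine ⟨-(n:ℝ), fun q hq => ?_⟩
  by_contra hc
  push_neg at hc
  exact absurd (medSet_up hq hc.le) (not_le.mpr hn)

lemma med_lt_iff {f : ℝ → ℝ} (hf : Measurable f) {r : ℝ} :
    med ν f < r ↔ ∃ q : ℚ, (q:ℝ) < r ∧ 2⁻¹ ≤ ν {v | f v ≤ (q:ℝ)} := by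
  rw [med, csInf_lt_iff (medSet_bddBelow hf) (medSet_nonempty f)]
  constructor
  · rintro ⟨y, hy, hyr⟩
    obtain ⟨p, hp1, hp2⟩ := exists_rat_btwn hyr
    exact ⟨p, hp2, medSet_up hy hp1.le⟩
  · rintro ⟨p, hp1, hp2⟩
    exact ⟨(p:ℝ), hp2, hp1⟩

lemma med_congr {f g : ℝ → ℝ} (h : f =ᵐ[ν] g) : med ν f = med ν g := by
  unfold med
  congr 1
  ext q
  have : ν {v | f v ≤ q} = ν {v | g v ≤ q} := by
    apply measure_congr
    filter_upwards [h] with v hv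
    change (f v ≤ q) = (g v ≤ q)
    rw [hv]
  simp only [Set.mem_setOf_eq, this]

lemma med_add_const {f : ℝ → ℝ} (hf : Measurable f) (c : ℝ) :
    med ν (fun v => f v + c) = med ν f + c := by
  have hsets : ∀ q : ℝ, {v | f v + c ≤ q} = {v | f v ≤ q - c} := by
    intro q
    ext v
    simp only [Set.mem_setOf_eq]
    constructor
    · intro h'; linarith
    · intro h'; linarith
  have hS : {q : ℝ | 2⁻¹ ≤ ν {v | f v + c ≤ q}}
      = (fun q => q + c) '' {q : ℝ | 2⁻¹ ≤ ν {v | f v ≤ q}} := by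
    ext q
    simp only [Set.mem_setOf_eq, Set.mem_image, hsets]
    constructor
    · intro h
      exact ⟨q - c, h, by ring⟩
    · rintro ⟨p, hp, rfl⟩
      rw [add_sub_cancel_right]
      exact hp
  rw [med, hS]
  have h1 : Monotone (fun q : ℝ => q + c) := fun a b hab => by simpa using hab
  have h2 : ContinuousAt (fun q : ℝ => q + c) (sInf {q : ℝ | 2⁻¹ ≤ ν {v | f v ≤ q}}) :=
    (continuous_id.add continuous_const).continuousAt
  exact (h1.map_csInf_of_continuousAt h2 (medSet_nonempty f) (medSet_bddBelow hf)).symm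

lemma med_zero_of_sub (f : ℝ → ℝ) (hf : Measurable f) :
    med ν (fun v => f v - med ν f) = 0 := by
  have := med_add_const (ν := ν) hf (-(med ν f))
  simpa [sub_eq_add_neg] using this

/-- Essential value functional: equals `c` whenever `f` is a.e. constant `= c`. -/
noncomputable def cva (ν : Measure ℝ) (f : ℝ → ℝ) : ℝ :=
  Real.tan (∫ v, Real.arctan (f v) ∂ν)

lemma cva_ae_const {f : ℝ → ℝ} {c : ℝ} (h : f =ᵐ[ν] fun _ => c) : cva ν f = c := by
  have h2 : (fun v => Real.arctan (f v)) =ᵐ[ν] fun _ => Real.arctan c := by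
    filter_upwards [h] with v hv; rw [hv]
  rw [cva, integral_congr_ae h2, integral_const, Measure.real, measure_univ, ENNReal.toReal_one, one_smul,
    Real.tan_arctan]

/-- Parametric measurability of `med`. -/
lemma measurable_med {α : Type*} [MeasurableSpace α] {F : α → ℝ → ℝ}
    (hF : Measurable fun p : α × ℝ => F p.1 p.2) :
    Measurable fun a => med ν (F a) := by
  apply measurable_of_Iio
  intro r
  have hset : ∀ q : ℚ, MeasurableSet {p : α × ℝ | F p.1 p.2 ≤ (q:ℝ)} := fun q =>
    measurableSet_le hF measurable_const
  have heq : (fun a => med ν (F a)) ⁻¹' (Set.Iio r)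
      = ⋃ (q : ℚ) (_ : (q:ℝ) < r), {a | 2⁻¹ ≤ ν {v | F a v ≤ (q:ℝ)}} := by
    ext a
    simp only [Set.mem_preimage, Set.mem_Iio, Set.mem_iUnion, Set.mem_setOf_eq]
    rw [med_lt_iff (show Measurable (F a) from hF.comp (measurable_prodMk_left))]
    tauto
  rw [heq]
  refine MeasurableSet.iUnion fun q => MeasurableSet.iUnion fun _ => ?_
  have hm : Measurable (fun a => ν (Prod.mk a ⁻¹' {p : α × ℝ | F p.1 p.2 ≤ (q:ℝ)})) :=
    measurable_measure_prodMk_left (hset q)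
  exact hm measurableSet_Ici

/-- Parametric measurability of `cva`. -/
lemma measurable_cva {α : Type*} [MeasurableSpace α] {F : α → ℝ → ℝ}
    (hF : Measurable fun p : α × ℝ => F p.1 p.2) :
    Measurable fun a => cva ν (F a) := by
  have h1 : StronglyMeasurable fun p : α × ℝ => Real.arctan (F p.1 p.2) :=
    (Real.measurable_arctan.comp hF).stronglyMeasurable
  have h2 := h1.integral_prod_right' (ν := ν)
  have h3 : Measurable Real.tan := by
    have : Real.tan = fun x => Real.sin x / Real.cos x := by
      funext x; exact Real.tan_eq_sin_div_cos x
    rw [this]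
    exact Real.measurable_sin.div Real.measurable_cos
  exact h3.comp h2.measurable


end medsec

end S2

/-- Multiplicative version of Statement 1: an almost semi-additive
functional related to a jointly measurable cocycle `B` (values in `ℝ∖{0}`) and a
measurable nonsingular multiplicative flow `ψ` on a standard Lebesgue space has a
version which is a (jointly measurable, everywhere) semi-additive functional related
to `B`. -/
theorem stmt2 {X : Type*} [MeasurableSpace X] [StandardBorelSpace X]
    (μ : Measure X) [SigmaFinite μ]
    (ψ : ℝ → X → X)
    (hψ_mul : ∀ c1 c2 : ℝ, 0 < c1 → 0 < c2 → ∀ x : X, ψ (c1 * c2) x = ψ c1 (ψ c2 x))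
    (hψ_one : ∀ x : X, ψ 1 x = x)
    (hψ_meas : Measurable (fun p : ℝ × X => ψ p.1 p.2))
    (hψ_ns : ∀ c : ℝ, 0 < c → ∀ s : Set X, MeasurableSet s → μ s = 0 → μ (ψ c ⁻¹' s) = 0)
    (B : ℝ → X → ℝ)
    (hB_meas : Measurable (fun p : ℝ × X => B p.1 p.2))
    (hB_ne : ∀ c : ℝ, 0 < c → ∀ x : X, B c x ≠ 0)
    (hB : ∀ c1 c2 : ℝ, 0 < c1 → 0 < c2 → ∀ x : X, B (c1 * c2) x = B c1 x * B c2 (ψ c1 x))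
    (J : ℝ → X → ℝ)
    (hJ_meas : Measurable (fun p : ℝ × X => J p.1 p.2))
    (hJ : ∀ c1 c2 : ℝ, 0 < c1 → 0 < c2 →
      ∀ᵐ x ∂μ, J (c1 * c2) x = J c1 x + B c1 x * J c2 (ψ c1 x)) :
    ∃ J' : ℝ → X → ℝ,
      (∀ c : ℝ, 0 < c → J c =ᵐ[μ] J' c) ∧
      Measurable (fun p : ℝ × X => J' p.1 p.2) ∧
      ∀ c1 c2 : ℝ, 0 < c1 → 0 < c2 →
        ∀ x : X, J' (c1 * c2) x = J' c1 x + B c1 x * J' c2 (ψ c1 x) := by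
  classical
  have hpos := S2.nu_ae_pos
  have hJ_x : ∀ x : X, Measurable fun v : ℝ => J v x := fun x =>
    hJ_meas.comp (measurable_id.prodMk measurable_const)
  -- The auxiliary kernel `F x s v = B s x * J (v/s) (ψ s x)`; a.e. it equals `J v x - J s x`.
  obtain ⟨F, hFdef⟩ : ∃ F : X → ℝ → ℝ → ℝ, F = fun x s v => B s x * J (v / s) (ψ s x) :=
    ⟨_, rfl⟩
  have hF3 : Measurable fun p : X × ℝ × ℝ => F p.1 p.2.1 p.2.2 := by
    simp only [hFdef]
    apply Measurable.mul
    · exact hB_meas.comp ((measurable_snd.fst).prodMk measurable_fst)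
    · exact hJ_meas.comp (((measurable_snd.snd).div (measurable_snd.fst)).prodMk
        (hψ_meas.comp ((measurable_snd.fst).prodMk measurable_fst)))
  have hF_y : ∀ y : X, Measurable fun z : ℝ × ℝ => F y z.1 z.2 := fun y =>
    hF3.comp (measurable_const.prodMk measurable_id)
  -- its median in `v`
  obtain ⟨m, hmdef⟩ : ∃ m : X → ℝ → ℝ, m = fun x s => S2.med S2.nu (F x s) := ⟨_, rfl⟩
  have hm2 : Measurable fun p : X × ℝ => m p.1 p.2 := by
    simp only [hmdef]
    apply S2.measurable_med (F := fun (p : X × ℝ) v => F p.1 p.2 v)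
    exact hF3.comp ((measurable_fst.fst).prodMk ((measurable_fst.snd).prodMk measurable_snd))
  -- the normalized kernel
  obtain ⟨Fh, hFhdef⟩ : ∃ Fh : X → ℝ → ℝ → ℝ, Fh = fun x s v => F x s v - m x s := ⟨_, rfl⟩
  have hFh3 : Measurable fun p : X × ℝ × ℝ => Fh p.1 p.2.1 p.2.2 := by
    simp only [hFhdef]
    exact hF3.sub (hm2.comp (measurable_fst.prodMk (measurable_snd.fst)))
  have hFh_y : ∀ y : X, Measurable fun z : ℝ × ℝ => Fh y z.1 z.2 := fun y =>
    hFh3.comp (measurable_const.prodMk measurable_id)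
  have hFh_y1 : ∀ (y : X) (s : ℝ), Measurable fun v : ℝ => Fh y s v := fun y s =>
    (hFh_y y).comp (measurable_const.prodMk measurable_id)
  -- median of `J · x`
  obtain ⟨M, hMdef⟩ : ∃ M : X → ℝ, M = fun x => S2.med S2.nu (fun v => J v x) := ⟨_, rfl⟩
  have hM : Measurable M := by
    simp only [hMdef]
    exact S2.measurable_med (F := fun (x : X) (v : ℝ) => J v x)
      (hJ_meas.comp (measurable_snd.prodMk measurable_fst))
  -- the canonical representative
  obtain ⟨g, hgdef⟩ : ∃ g : X → ℝ → ℝ, g = fun x v => S2.cva S2.nu (fun s => Fh x s v) :=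
    ⟨_, rfl⟩
  have hg2 : Measurable fun p : X × ℝ => g p.1 p.2 := by
    simp only [hgdef]
    apply S2.measurable_cva (F := fun (p : X × ℝ) s => Fh p.1 s p.2)
    exact hFh3.comp ((measurable_fst.fst).prodMk (measurable_snd.prodMk (measurable_fst.snd)))
  have hg_y : ∀ y : X, Measurable fun v : ℝ => g y v := fun y =>
    hg2.comp (measurable_const.prodMk measurable_id)
  -- the constant-extraction
  obtain ⟨q, hqdef⟩ : ∃ q : ℝ → X → ℝ,
      q = fun a x => S2.cva S2.nu (fun v => g x v - B a x * g (ψ a x) (v / a)) := ⟨_, rfl⟩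
  have hq2 : Measurable fun p : ℝ × X => q p.1 p.2 := by
    simp only [hqdef]
    apply S2.measurable_cva
      (F := fun (p : ℝ × X) v => g p.2 v - B p.1 p.2 * g (ψ p.1 p.2) (v / p.1))
    apply Measurable.sub
    · exact hg2.comp ((measurable_fst.snd).prodMk measurable_snd)
    · apply Measurable.mul
      · exact hB_meas.comp ((measurable_fst.fst).prodMk (measurable_fst.snd))
      · exact hg2.comp ((hψ_meas.comp ((measurable_fst.fst).prodMk
          (measurable_fst.snd))).prodMk (measurable_snd.div (measurable_fst.fst)))
  -- the good set
  obtain ⟨Xg, hXgdef⟩ : ∃ Xg : Set X,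
      Xg = {x | ∀ᵐ z ∂(S2.nu.prod (S2.nu.prod S2.nu)), Fh x z.1 z.2.1 = Fh x z.2.2 z.2.1} :=
    ⟨_, rfl⟩
  have hms3 : ∀ y : X, MeasurableSet {z : ℝ × ℝ × ℝ | Fh y z.1 z.2.1 = Fh y z.2.2 z.2.1} :=
    fun y => measurableSet_eq_fun
      ((hFh_y y).comp (measurable_fst.prodMk (measurable_fst.comp measurable_snd)))
      ((hFh_y y).comp ((measurable_snd.comp measurable_snd).prodMk
        (measurable_fst.comp measurable_snd)))
  have hXg_meas : MeasurableSet Xg := by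
    rw [hXgdef]
    apply S2.measurableSet_ae
      (P := fun (x : X) (z : ℝ × ℝ × ℝ) => Fh x z.1 z.2.1 = Fh x z.2.2 z.2.1)
    exact measurableSet_eq_fun
      (hFh3.comp (measurable_fst.prodMk ((measurable_fst.comp measurable_snd).prodMk
        ((measurable_fst.comp (measurable_snd.comp measurable_snd))))))
      (hFh3.comp (measurable_fst.prodMk ((measurable_snd.comp
        (measurable_snd.comp measurable_snd)).prodMk
        ((measurable_fst.comp (measurable_snd.comp measurable_snd))))))
  have hmsw : ∀ (y : X) (s : ℝ), MeasurableSet {w : ℝ × ℝ | Fh y s w.1 = Fh y w.2 w.1} :=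
    fun y s => measurableSet_eq_fun ((hFh_y1 y s).comp measurable_fst)
      ((hFh_y y).comp (measurable_snd.prodMk measurable_fst))
  have hmsw2 : ∀ (y : X) (s : ℝ), MeasurableSet {w : ℝ × ℝ | Fh y s w.2 = Fh y w.1 w.2} :=
    fun y s => measurableSet_eq_fun ((hFh_y1 y s).comp measurable_snd) (hFh_y y)
  have hmtri : ∀ y : X, MeasurableSet {z : ℝ × ℝ × ℝ | Fh y z.1 z.2.2 = Fh y z.2.1 z.2.2} :=
    fun y => measurableSet_eq_fun
      ((hFh_y y).comp (measurable_fst.prodMk (measurable_snd.comp measurable_snd)))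
      ((hFh_y y).comp ((measurable_fst.comp measurable_snd).prodMk
        (measurable_snd.comp measurable_snd)))
  have hmx1 : ∀ x : X, MeasurableSet {z : ℝ × ℝ | Fh x z.1 z.2 = J z.2 x - M x} := fun x =>
    measurableSet_eq_fun (hFh_y x)
      ((hJ_meas.comp (measurable_snd.prodMk measurable_const)).sub measurable_const)
  -- ψ-pullback of null sets
  have hpull : ∀ {a : ℝ}, 0 < a → ∀ {P : X → Prop}, MeasurableSet {x | P x} →
      (∀ᵐ x ∂μ, P x) → (∀ᵐ x ∂μ, P (ψ a x)) := by
    intro a ha P hP h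
    rw [ae_iff] at h ⊢
    have : {x | ¬ P (ψ a x)} = ψ a ⁻¹' {x | ¬ P x} := rfl
    rw [this]
    exact hψ_ns a ha _ (show MeasurableSet {x | P x}ᶜ from hP.compl) h
  -- Step K2 : a.e. identity in the original form
  have hK2 : ∀ a : ℝ, 0 < a →
      ∀ᵐ x ∂μ, ∀ᵐ v ∂S2.nu, J v x = J a x + B a x * J (v / a) (ψ a x) := by
    intro a ha
    have hmeasK2 : MeasurableSet
        {p : X × ℝ | J p.2 p.1 = J a p.1 + B a p.1 * J (p.2 / a) (ψ a p.1)} := by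
      apply measurableSet_eq_fun
      · exact hJ_meas.comp (measurable_snd.prodMk measurable_fst)
      · apply Measurable.add
        · exact hJ_meas.comp (measurable_const.prodMk measurable_fst)
        · exact (hB_meas.comp (measurable_const.prodMk measurable_fst)).mul
            (hJ_meas.comp ((measurable_snd.div measurable_const).prodMk
              (hψ_meas.comp (measurable_const.prodMk measurable_fst))))
    rw [Measure.ae_ae_comm hmeasK2]
    filter_upwards [hpos] with v hv
    filter_upwards [hJ a (v / a) ha (div_pos hv ha)] with x hx
    rw [show a * (v / a) = v from by field_simp] at hx
    exact hx
  -- Step K3 : a.e. `F x s v = J v x - J s x`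
  have hK3 : ∀ᵐ x ∂μ, ∀ᵐ s ∂S2.nu, ∀ᵐ v ∂S2.nu, F x s v = J v x - J s x := by
    have hmeasQ : MeasurableSet
        {p : ℝ × X | ∀ᵐ v ∂S2.nu, F p.2 p.1 v = J v p.2 - J p.1 p.2} := by
      apply S2.measurableSet_ae
        (P := fun (p : ℝ × X) (v : ℝ) => F p.2 p.1 v = J v p.2 - J p.1 p.2)
      apply measurableSet_eq_fun
      · exact hF3.comp ((measurable_fst.snd).prodMk
          ((measurable_fst.fst).prodMk measurable_snd))
      · exact (hJ_meas.comp (measurable_snd.prodMk (measurable_fst.snd))).sub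
          (hJ_meas.comp ((measurable_fst.fst).prodMk (measurable_fst.snd)))
    have h1 : ∀ᵐ s ∂S2.nu, ∀ᵐ x ∂μ, ∀ᵐ v ∂S2.nu, F x s v = J v x - J s x := by
      filter_upwards [hpos] with s hs
      filter_upwards [hK2 s hs] with x hx
      filter_upwards [hx] with v hv
      simp only [hFdef]
      linarith [hv]
    exact (Measure.ae_ae_comm hmeasQ).mp h1
  -- Step K4 : medians
  have hmed : ∀ᵐ x ∂μ, ∀ᵐ s ∂S2.nu, m x s = M x - J s x := by
    filter_upwards [hK3] with x hx
    filter_upwards [hx] with s hsx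
    have heq : (fun v => F x s v) =ᵐ[S2.nu] (fun v => J v x + -(J s x)) := by
      filter_upwards [hsx] with v hv
      rw [hv]; ring
    simp only [hmdef, hMdef]
    rw [S2.med_congr heq, S2.med_add_const (hJ_x x) (-(J s x))]
    ring
  have hFhae : ∀ᵐ x ∂μ, ∀ᵐ s ∂S2.nu, ∀ᵐ v ∂S2.nu, Fh x s v = J v x - M x := by
    filter_upwards [hK3, hmed] with x h1 h2
    filter_upwards [h1, h2] with s hs1 hs2
    filter_upwards [hs1] with v hv
    simp only [hFhdef]
    rw [hv, hs2]; ring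
  -- Step K5 : the good set is conull
  have hXg_ae : ∀ᵐ x ∂μ, x ∈ Xg := by
    filter_upwards [hFhae] with x hx
    rw [hXgdef]
    simp only [Set.mem_setOf_eq]
    have hA' : ∀ᵐ v ∂S2.nu, ∀ᵐ s' ∂S2.nu, Fh x s' v = J v x - M x :=
      (Measure.ae_ae_comm (hmx1 x)).mp hx
    rw [Measure.ae_prod_iff_ae_ae (hms3 x)]
    filter_upwards [hx] with s hs
    rw [Measure.ae_prod_iff_ae_ae (hmsw x s)]
    filter_upwards [hs, hA'] with v hv hv'
    filter_upwards [hv'] with s' hs'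
    rw [hv, hs']
  -- exact transformation rule
  have hE1 : ∀ (y : X) (a s v : ℝ), 0 < a → 0 < s → 0 < v →
      F y (a * s) (a * v) = B a y * F (ψ a y) s v := by
    intro y a s v ha hs hv
    simp only [hFdef]
    rw [hB a s ha hs, show a * v / (a * s) = v / s from mul_div_mul_left _ _ ha.ne',
      show ψ (a * s) y = ψ s (ψ a y) from by rw [mul_comm a s, hψ_mul s a hs ha]]
    ring
  -- Step K6 : invariance of the good set
  have hXg_fwd : ∀ a : ℝ, 0 < a → ∀ x : X, x ∈ Xg → ψ a x ∈ Xg := by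
    intro a ha x hx
    rw [hXgdef] at hx ⊢
    simp only [Set.mem_setOf_eq] at hx ⊢
    -- reorder the triple to (s, s', v)
    have h1 : ∀ᵐ s ∂S2.nu, ∀ᵐ s' ∂S2.nu, ∀ᵐ v ∂S2.nu, Fh x s v = Fh x s' v := by
      have h2 := Measure.ae_ae_of_ae_prod hx
      filter_upwards [h2] with s h3
      have h4 := Measure.ae_ae_of_ae_prod h3
      exact (Measure.ae_ae_comm (hmsw x s)).mp h4
    -- productize in order (s, (s', v))
    have h5 : ∀ᵐ z ∂(S2.nu.prod (S2.nu.prod S2.nu)),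
        Fh x z.1 z.2.2 = Fh x z.2.1 z.2.2 := by
      rw [Measure.ae_prod_iff_ae_ae (hmtri x)]
      filter_upwards [h1] with s hs
      rw [Measure.ae_prod_iff_ae_ae (hmsw2 x s)]
      exact hs
    -- scale all three coordinates by a
    have h6 := S2.nu_scale_ae3 (P := fun s s' v => Fh x s v = Fh x s' v)
      (hmtri x) ha ha ha h5
    -- back to nested form, with positivity
    have h7 : ∀ᵐ s ∂S2.nu, 0 < s ∧
        ∀ᵐ s' ∂S2.nu, 0 < s' ∧
          ∀ᵐ v ∂S2.nu, 0 < v ∧ Fh x (a * s) (a * v) = Fh x (a * s') (a * v) := by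
      have h6n := Measure.ae_ae_of_ae_prod h6
      filter_upwards [h6n, hpos] with s hs hspos
      refine ⟨hspos, ?_⟩
      have h6n2 := Measure.ae_ae_of_ae_prod hs
      filter_upwards [h6n2, hpos] with s' hs' hs'pos
      refine ⟨hs'pos, ?_⟩
      filter_upwards [hs', hpos] with v hv hvpos
      exact ⟨hvpos, hv⟩
    -- medians kill the constants
    have h8 : ∀ᵐ s ∂S2.nu, ∀ᵐ s' ∂S2.nu, ∀ᵐ v ∂S2.nu,
        Fh (ψ a x) s v = Fh (ψ a x) s' v := by
      filter_upwards [h7] with s hs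
      obtain ⟨hspos, hs2⟩ := hs
      filter_upwards [hs2] with s' hs'
      obtain ⟨hs'pos, hs'2⟩ := hs'
      have hvc : ∀ᵐ v ∂S2.nu, Fh (ψ a x) s v = Fh (ψ a x) s' v +
          ((m x (a * s) - m x (a * s')) / B a x - m (ψ a x) s + m (ψ a x) s') := by
        filter_upwards [hs'2] with v hv
        obtain ⟨hvpos, heq⟩ := hv
        have e1 := hE1 x a s v ha hspos hvpos
        have e2 := hE1 x a s' v ha hs'pos hvpos
        simp only [hFhdef] at heq ⊢
        rw [e1, e2] at heq
        have hBne := hB_ne a ha x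
        have h9 : F (ψ a x) s v - F (ψ a x) s' v
            = (m x (a * s) - m x (a * s')) / B a x := by
          rw [eq_div_iff hBne]
          ring_nf
          ring_nf at heq
          linarith [heq]
        linarith [h9]
      have hmz1 : S2.med S2.nu (fun v => Fh (ψ a x) s v) = 0 := by
        simp only [hFhdef, hmdef]
        exact S2.med_zero_of_sub (F (ψ a x) s)
          ((hF_y (ψ a x)).comp (measurable_const.prodMk measurable_id))
      have hmz2 : S2.med S2.nu (fun v => Fh (ψ a x) s' v) = 0 := by
        simp only [hFhdef, hmdef]
        exact S2.med_zero_of_sub (F (ψ a x) s')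
          ((hF_y (ψ a x)).comp (measurable_const.prodMk measurable_id))
      have hc0 : (m x (a * s) - m x (a * s')) / B a x - m (ψ a x) s + m (ψ a x) s' = 0 := by
        have hcongr := S2.med_congr hvc
        rw [hmz1, S2.med_add_const (hFh_y1 (ψ a x) s') _, hmz2, zero_add] at hcongr
        linarith [hcongr]
      filter_upwards [hvc] with v hv
      rw [hv, hc0, add_zero]
    -- reorder back and productize
    rw [Measure.ae_prod_iff_ae_ae (hms3 (ψ a x))]
    have h8' : ∀ᵐ s ∂S2.nu, ∀ᵐ v ∂S2.nu, ∀ᵐ s' ∂S2.nu,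
        Fh (ψ a x) s v = Fh (ψ a x) s' v := by
      filter_upwards [h8] with s hs
      exact (Measure.ae_ae_comm (p := fun v s' => Fh (ψ a x) s v = Fh (ψ a x) s' v)
        (hmsw (ψ a x) s)).mpr hs
    filter_upwards [h8'] with s hs
    rw [Measure.ae_prod_iff_ae_ae (hmsw (ψ a x) s)]
    exact hs
  have hXg_bwd : ∀ a : ℝ, 0 < a → ∀ x : X, ψ a x ∈ Xg → x ∈ Xg := by
    intro a ha x hx
    have := hXg_fwd a⁻¹ (inv_pos.mpr ha) (ψ a x) hx
    have hcomp : ψ a⁻¹ (ψ a x) = x := by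
      rw [← hψ_mul a⁻¹ a (inv_pos.mpr ha) ha, inv_mul_cancel₀ ha.ne', hψ_one]
    rwa [hcomp] at this
  -- Step K7 : on the good set, `g` is an honest representative
  have hK7 : ∀ x : X, x ∈ Xg → ∀ᵐ s ∂S2.nu, ∀ᵐ v ∂S2.nu, g x v = Fh x s v := by
    intro x hx
    rw [hXgdef] at hx
    simp only [Set.mem_setOf_eq] at hx
    have h1 := Measure.ae_ae_of_ae_prod hx
    filter_upwards [h1] with s h2
    have h3 := Measure.ae_ae_of_ae_prod h2
    filter_upwards [h3] with v h4
    simp only [hgdef]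
    exact S2.cva_ae_const (h4.mono fun s' hs' => hs'.symm)
  -- Step K8 : exact quasi-invariance of `g` up to constants, on the good set
  have hK8 : ∀ a : ℝ, 0 < a → ∀ x : X, x ∈ Xg →
      ∃ c : ℝ, ∀ᵐ v ∂S2.nu, g x v - B a x * g (ψ a x) (v / a) = c := by
    intro a ha x hx
    have hx' : ψ a x ∈ Xg := hXg_fwd a ha x hx
    have h1 := hK7 x hx
    have h2 := hK7 (ψ a x) hx'
    have hm1 : ∀ y : X, MeasurableSet {z : ℝ × ℝ | g y z.2 = Fh y z.1 z.2} := fun y =>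
      measurableSet_eq_fun ((hg_y y).comp measurable_snd) (hFh_y y)
    have h1p : ∀ᵐ z ∂(S2.nu.prod S2.nu), g x z.2 = Fh x z.1 z.2 :=
      (Measure.ae_prod_iff_ae_ae (hm1 x)).mpr h1
    have h2p : ∀ᵐ z ∂(S2.nu.prod S2.nu), g (ψ a x) z.2 = Fh (ψ a x) z.1 z.2 :=
      (Measure.ae_prod_iff_ae_ae (hm1 (ψ a x))).mpr h2
    have h1s : ∀ᵐ z ∂(S2.nu.prod S2.nu), g x z.2 = Fh x (a * z.1) z.2 := by
      have := S2.nu_scale_ae2 (P := fun s v => g x v = Fh x s v) (hm1 x) ha one_pos h1p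
      simpa only [one_mul] using this
    have h2s : ∀ᵐ z ∂(S2.nu.prod S2.nu),
        g (ψ a x) (a⁻¹ * z.2) = Fh (ψ a x) z.1 (a⁻¹ * z.2) := by
      have := S2.nu_scale_ae2 (P := fun s v => g (ψ a x) v = Fh (ψ a x) s v)
        (hm1 (ψ a x)) one_pos (inv_pos.mpr ha) h2p
      simpa only [one_mul] using this
    have h1n := Measure.ae_ae_of_ae_prod h1s
    have h2n := Measure.ae_ae_of_ae_prod h2s
    have hcomb : ∀ᵐ s ∂S2.nu, 0 < s ∧
        (∀ᵐ v ∂S2.nu, g x v = Fh x (a * s) v) ∧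
        (∀ᵐ v ∂S2.nu, g (ψ a x) (a⁻¹ * v) = Fh (ψ a x) s (a⁻¹ * v)) := by
      filter_upwards [hpos, h1n, h2n] with s h ha' hb'
      exact ⟨h, ha', hb'⟩
    obtain ⟨s0, hs0pos, hs0a, hs0b⟩ := hcomb.exists
    refine ⟨B a x * m (ψ a x) s0 - m x (a * s0), ?_⟩
    filter_upwards [hs0a, hs0b, hpos] with v hva hvb hvpos
    have hw : 0 < a⁻¹ * v := mul_pos (inv_pos.mpr ha) hvpos
    have e1 := hE1 x a s0 (a⁻¹ * v) ha hs0pos hw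
    rw [show a * (a⁻¹ * v) = v from by field_simp] at e1
    rw [div_eq_inv_mul]
    simp only [hFhdef] at hva hvb
    rw [hva, hvb, e1]
    ring
  -- Step K9 : additivity of `q` on the good set
  have hq_add : ∀ a b : ℝ, 0 < a → 0 < b → ∀ x : X, x ∈ Xg →
      q (a * b) x = q a x + B a x * q b (ψ a x) := by
    intro a b ha hb x hx
    have hab : 0 < a * b := mul_pos ha hb
    have hx' : ψ a x ∈ Xg := hXg_fwd a ha x hx
    obtain ⟨c1, hc1⟩ := hK8 (a * b) hab x hx
    obtain ⟨c2, hc2⟩ := hK8 a ha x hx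
    obtain ⟨c3, hc3⟩ := hK8 b hb (ψ a x) hx'
    have hq1 : q (a * b) x = c1 := by simp only [hqdef]; exact S2.cva_ae_const hc1
    have hq2' : q a x = c2 := by simp only [hqdef]; exact S2.cva_ae_const hc2
    have hq3 : q b (ψ a x) = c3 := by simp only [hqdef]; exact S2.cva_ae_const hc3
    have hm3 : MeasurableSet
        {w : ℝ | g (ψ a x) w - B b (ψ a x) * g (ψ b (ψ a x)) (w / b) = c3} := by
      apply measurableSet_eq_fun _ measurable_const
      exact (hg_y (ψ a x)).sub
        ((((hg_y (ψ b (ψ a x))).comp (measurable_id.div_const b))).const_mul _)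
    have hc3' : ∀ᵐ v ∂S2.nu,
        g (ψ a x) (a⁻¹ * v) - B b (ψ a x) * g (ψ b (ψ a x)) ((a⁻¹ * v) / b) = c3 :=
      S2.nu_scale_ae
        (P := fun w => g (ψ a x) w - B b (ψ a x) * g (ψ b (ψ a x)) (w / b) = c3)
        hm3 (inv_pos.mpr ha) hc3
    obtain ⟨v, hv1, hv2, hv3⟩ := (hc1.and (hc2.and hc3')).exists
    rw [hq1, hq2', hq3]
    have hψab : ψ (a * b) x = ψ b (ψ a x) := by rw [mul_comm a b, hψ_mul b a hb ha]
    have hBab := hB a b ha hb x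
    have hdiv : v / (a * b) = a⁻¹ * v / b := by
      field_simp
    rw [hψab, hBab, hdiv] at hv1
    rw [div_eq_inv_mul] at hv2
    rw [← hv1, ← hv2, ← hv3]
    ring
  -- Step K10 : versionness of `q`
  have hg_ae : ∀ᵐ x ∂μ, ∀ᵐ v ∂S2.nu, g x v = J v x - M x := by
    filter_upwards [hFhae] with x hx
    have hsw := (Measure.ae_ae_comm (hmx1 x)).mp hx
    filter_upwards [hsw] with v hv
    simp only [hgdef]
    exact S2.cva_ae_const (hv.mono fun s hs => hs)
  have hq_ver : ∀ a : ℝ, 0 < a →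
      ∀ᵐ x ∂μ, q a x = J a x - M x + B a x * M (ψ a x) := by
    intro a ha
    have hmgset : MeasurableSet {x : X | ∀ᵐ v ∂S2.nu, g x v = J v x - M x} := by
      apply S2.measurableSet_ae (P := fun (x : X) (v : ℝ) => g x v = J v x - M x)
      exact measurableSet_eq_fun hg2
        ((hJ_meas.comp (measurable_snd.prodMk measurable_fst)).sub (hM.comp measurable_fst))
    have hpb : ∀ᵐ x ∂μ, ∀ᵐ v ∂S2.nu, g (ψ a x) v = J v (ψ a x) - M (ψ a x) :=
      hpull ha (P := fun x => ∀ᵐ v ∂S2.nu, g x v = J v x - M x) hmgset hg_ae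
    filter_upwards [hg_ae, hpb, hK2 a ha] with x h1 h2 h3
    have h2' : ∀ᵐ v ∂S2.nu, g (ψ a x) (a⁻¹ * v) = J (a⁻¹ * v) (ψ a x) - M (ψ a x) := by
      refine S2.nu_scale_ae
        (P := fun w => g (ψ a x) w = J w (ψ a x) - M (ψ a x)) ?_ (inv_pos.mpr ha) h2
      exact measurableSet_eq_fun (hg_y (ψ a x))
        ((hJ_meas.comp (measurable_id.prodMk measurable_const)).sub measurable_const)
    have hint : ∀ᵐ v ∂S2.nu,
        g x v - B a x * g (ψ a x) (v / a) = J a x - M x + B a x * M (ψ a x) := by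
      filter_upwards [h1, h2', h3] with v hv1 hv2 hv3
      rw [div_eq_inv_mul, hv1, hv2]
      rw [div_eq_inv_mul] at hv3
      rw [hv3]
      ring
    simp only [hqdef]
    exact S2.cva_ae_const hint
  -- Final assembly
  refine ⟨fun a x => (if x ∈ Xg then q a x else 0) + (M x - B a x * M (ψ a x)), ?_, ?_, ?_⟩
  · intro c hc
    filter_upwards [hXg_ae, hq_ver c hc] with x hx1 hx2
    rw [if_pos hx1, hx2]
    ring
  · apply Measurable.add
    · have hι : MeasurableSet {p : ℝ × X | p.2 ∈ Xg} := hXg_meas.preimage measurable_snd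
      exact Measurable.ite hι hq2 measurable_const
    · apply Measurable.sub
      · exact hM.comp measurable_snd
      · exact hB_meas.mul (hM.comp hψ_meas)
  · intro a b ha hb x
    have hψab : ψ (a * b) x = ψ b (ψ a x) := by
      rw [show a * b = b * a from mul_comm a b, hψ_mul b a hb ha]
    have hBab : B (a * b) x = B a x * B b (ψ a x) := hB a b ha hb x
    by_cases hx : x ∈ Xg
    · have hx' : ψ a x ∈ Xg := hXg_fwd a ha x hx
      simp only [if_pos hx, if_pos hx']
      rw [hq_add a b ha hb x hx, hBab, hψab]
      ring
    · have hx' : ψ a x ∉ Xg := fun h => hx (hXg_bwd a ha x h)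
      simp only [if_neg hx, if_neg hx']
      rw [hBab, hψab]
      ring
end

section
/- Let {φ_t}_{t∈ℝ} be the special flow on Ω = {(y,u) : y ∈ Y, 0 ≤ u < r(y)} built from (Y, τ), V and r, let {A_t}_{t∈ℝ} be a cocycle for {φ_t} taking values in ℝ∖{0}, and let {F_t}_{t∈ℝ} be a semi-additive functional related to {A_t}. Then there exist functions F⁰ : Ω → ℝ and F₁ : Y → ℝ such that for all t ∈ ℝ and (y,u) ∈ Ω, F_t(y,u) = F^{(1)}_t(y,u) + F^{(2)}_t(y,u), where F^{(1)}_t(y,u) = A_t(y,u) F⁰(φ_t(y,u)) − F⁰(y,u), and F^{(2)}_t(y,u) = (A_u(y,0))^{-1} Σ_{k∈[0,n)} A_{r_k(y)}(y,0) F₁(V^k y) with n the unique integer satisfying r_n(y) ≤ t + u < r_{n+1}(y). Moreover, each of F^{(1)} and F^{(2)} is itself a semi-additive functional related to the cocycle {A_t}. -/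
/-- Signed sum `Σ_{k∈[0,n)} h(k)`: equal to `Σ_{k=0}^{n−1} h(k)` for `n ≥ 0` and to
`−Σ_{k=n}^{−1} h(k)` for `n ≤ −1`. -/
noncomputable def zsum (h : ℤ → ℝ) (n : ℤ) : ℝ :=
  if 0 ≤ n then ∑ k ∈ Finset.range n.toNat, h (k : ℤ)
  else -∑ k ∈ Finset.range (-n).toNat, h (n + (k : ℤ))

/-- `r_n(y) = Σ_{k∈[0,n)} r(V^k y)` for the special flow data `(V, r)`. -/
noncomputable def rn {Y : Type*} (V : Equiv.Perm Y) (r : Y → ℝ) (n : ℤ) (y : Y) : ℝ :=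
  zsum (fun k => r ((V ^ k) y)) n

lemma zsum_zero (h : ℤ → ℝ) : zsum h 0 = 0 := by simp [zsum]

lemma zsum_succ (h : ℤ → ℝ) (n : ℤ) : zsum h (n + 1) = zsum h n + h n := by
  unfold zsum
  rcases le_or_gt 0 n with hn | hn
  · rw [if_pos (show (0:ℤ) ≤ n + 1 by omega), if_pos hn]
    have h1 : (n + 1).toNat = n.toNat + 1 := by omega
    rw [h1, Finset.sum_range_succ, Int.toNat_of_nonneg hn]
  · rw [if_neg (show ¬ (0:ℤ) ≤ n by omega)]
    rcases eq_or_lt_of_le (show n + 1 ≤ 0 by omega) with h1 | h1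
    · have hn1 : n = -1 := by omega
      subst hn1
      norm_num
    · rw [if_neg (show ¬ (0:ℤ) ≤ n + 1 by omega)]
      have h2 : (-n).toNat = (-(n + 1)).toNat + 1 := by omega
      rw [h2, Finset.sum_range_succ']
      have h3 : ∀ k ∈ Finset.range (-(n + 1)).toNat,
          h (n + ((k : ℕ) + 1 : ℕ)) = h (n + 1 + (k : ℤ)) := by
        intro k _
        congr 1
        push_cast
        ring
      rw [Finset.sum_congr rfl h3]
      push_cast
      ring_nf

lemma rn_zero {Y : Type*} (V : Equiv.Perm Y) (r : Y → ℝ) (y : Y) : rn V r 0 y = 0 :=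
  zsum_zero _

lemma rn_succ {Y : Type*} (V : Equiv.Perm Y) (r : Y → ℝ) (n : ℤ) (y : Y) :
    rn V r (n + 1) y = rn V r n y + r ((V ^ n) y) :=
  zsum_succ _ n

lemma perm_zpow_add {Y : Type*} (V : Equiv.Perm Y) (m k : ℤ) (y : Y) :
    (V ^ (m + k)) y = (V ^ k) ((V ^ m) y) := by
  rw [add_comm, zpow_add, Equiv.Perm.mul_apply]

lemma rn_add {Y : Type*} (V : Equiv.Perm Y) (r : Y → ℝ) (m k : ℤ) (y : Y) :
    rn V r (m + k) y = rn V r m y + rn V r k ((V ^ m) y) := by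
  induction k using Int.induction_on with
  | zero => simp [rn_zero]
  | succ k ih =>
      have h1 : m + ((k : ℤ) + 1) = (m + k) + 1 := by ring
      rw [h1, rn_succ, ih, rn_succ, perm_zpow_add]
      ring
  | pred k ih =>
      have h1 : m + (-(k : ℤ) - 1) + 1 = m + -(k : ℤ) := by ring
      have e1 := rn_succ V r (m + (-(k : ℤ) - 1)) y
      rw [h1] at e1
      have e2 := rn_succ V r (-(k : ℤ) - 1) ((V ^ m) y)
      have h2 : (-(k : ℤ) - 1) + 1 = -(k : ℤ) := by ring
      rw [h2] at e2
      rw [ih] at e1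
      rw [perm_zpow_add] at e1
      linarith [e1, e2]

lemma rn_strictMono {Y : Type*} (V : Equiv.Perm Y) (r : Y → ℝ) (hr : ∀ y, 0 < r y) (y : Y) :
    StrictMono (fun n : ℤ => rn V r n y) := by
  apply strictMono_int_of_lt_succ
  intro n
  simp only [rn_succ]
  linarith [hr ((V ^ n) y)]

lemma exists_index {Y : Type*} (V : Equiv.Perm Y) (r : Y → ℝ) (hr : ∀ y, 0 < r y)
    (hdiv_top : ∀ y, Filter.Tendsto (fun n : ℕ => rn V r (n : ℤ) y) Filter.atTop Filter.atTop)
    (hdiv_bot : ∀ y, Filter.Tendsto (fun n : ℕ => rn V r (-(n : ℤ)) y) Filter.atTop Filter.atBot)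
    (y : Y) (s : ℝ) : ∃ n : ℤ, rn V r n y ≤ s ∧ s < rn V r (n + 1) y := by
  have hmono := rn_strictMono V r hr y
  obtain ⟨n0, hn0⟩ : ∃ n : ℕ, rn V r (-(n : ℤ)) y ≤ s :=
    (Filter.tendsto_atBot.mp (hdiv_bot y) s).exists
  obtain ⟨N, hNs⟩ : ∃ n : ℕ, s + 1 ≤ rn V r (n : ℤ) y :=
    (Filter.tendsto_atTop.mp (hdiv_top y) (s + 1)).exists
  have hbdd : ∀ z : ℤ, rn V r z y ≤ s → z ≤ (N : ℤ) := by
    intro z hz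
    exact le_of_lt (hmono.lt_iff_lt.mp (lt_of_le_of_lt hz (by linarith)))
  obtain ⟨lub, hlub, hmax⟩ :=
    Int.exists_greatest_of_bdd (P := fun z => rn V r z y ≤ s) ⟨(N : ℤ), hbdd⟩ ⟨-(n0 : ℤ), hn0⟩
  refine ⟨lub, hlub, ?_⟩
  by_contra h
  push_neg at h
  have := hmax _ h
  omega

/-- every semi-additive functional `F` related to a cocycle `A` over the
special flow `φ` decomposes as `F = F⁽¹⁾ + F⁽²⁾` with
`F⁽¹⁾_t(y,u) = A_t(y,u) F⁰(φ_t(y,u)) − F⁰(y,u)` and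
`F⁽²⁾_t(y,u) = (A_u(y,0))⁻¹ Σ_{k∈[0,n)} A_{r_k(y)}(y,0) F₁(V^k y)` (where
`r_n(y) ≤ t+u < r_{n+1}(y)`), and each of `F⁽¹⁾`, `F⁽²⁾` is itself a semi-additive
functional related to `A`. -/
theorem stmt3 {Y : Type*} (V : Equiv.Perm Y) (r : Y → ℝ) (hr : ∀ y, 0 < r y)
    (hdiv_top : ∀ y, Filter.Tendsto (fun n : ℕ => rn V r (n : ℤ) y) Filter.atTop Filter.atTop)
    (hdiv_bot : ∀ y, Filter.Tendsto (fun n : ℕ => rn V r (-(n : ℤ)) y) Filter.atTop Filter.atBot)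
    (φ : ℝ → Y × ℝ → Y × ℝ)
    (hφ : ∀ (t u : ℝ) (y : Y) (n : ℤ), 0 ≤ u → u < r y →
      rn V r n y ≤ t + u → t + u < rn V r (n + 1) y →
      φ t (y, u) = ((V ^ n) y, t + u - rn V r n y))
    (A : ℝ → Y × ℝ → ℝ)
    (hA_ne : ∀ (t u : ℝ) (y : Y), 0 ≤ u → u < r y → A t (y, u) ≠ 0)
    (hA : ∀ (t1 t2 u : ℝ) (y : Y), 0 ≤ u → u < r y →
      A (t1 + t2) (y, u) = A t1 (y, u) * A t2 (φ t1 (y, u)))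
    (F : ℝ → Y × ℝ → ℝ)
    (hF : ∀ (t1 t2 u : ℝ) (y : Y), 0 ≤ u → u < r y →
      F (t1 + t2) (y, u) = F t1 (y, u) + A t1 (y, u) * F t2 (φ t1 (y, u))) :
    ∃ (F0 : Y × ℝ → ℝ) (F1 : Y → ℝ) (F2 : ℝ → Y × ℝ → ℝ),
      -- `F⁽²⁾` is given by the stated formula
      (∀ (t u : ℝ) (y : Y) (n : ℤ), 0 ≤ u → u < r y →
        rn V r n y ≤ t + u → t + u < rn V r (n + 1) y →
        F2 t (y, u) = (A u (y, 0))⁻¹ *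
          zsum (fun k => A (rn V r k y) (y, 0) * F1 ((V ^ k) y)) n) ∧
      -- decomposition `F = F⁽¹⁾ + F⁽²⁾`
      (∀ (t u : ℝ) (y : Y), 0 ≤ u → u < r y →
        F t (y, u) = (A t (y, u) * F0 (φ t (y, u)) - F0 (y, u)) + F2 t (y, u)) ∧
      -- `F⁽¹⁾` is a semi-additive functional related to `A`
      (∀ (t1 t2 u : ℝ) (y : Y), 0 ≤ u → u < r y →
        A (t1 + t2) (y, u) * F0 (φ (t1 + t2) (y, u)) - F0 (y, u) =
          (A t1 (y, u) * F0 (φ t1 (y, u)) - F0 (y, u)) +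
            A t1 (y, u) *
              (A t2 (φ t1 (y, u)) * F0 (φ t2 (φ t1 (y, u))) - F0 (φ t1 (y, u)))) ∧
      -- `F⁽²⁾` is a semi-additive functional related to `A`
      (∀ (t1 t2 u : ℝ) (y : Y), 0 ≤ u → u < r y →
        F2 (t1 + t2) (y, u) = F2 t1 (y, u) + A t1 (y, u) * F2 t2 (φ t1 (y, u))) := by
  classical
  -- `rn 1 = r`
  have hrn1 : ∀ y : Y, rn V r 1 y = r y := by
    intro y
    rw [show (1 : ℤ) = 0 + 1 from rfl, rn_succ, rn_zero]
    simp
  -- `φ u (y,0) = (y,u)`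
  have hφ0 : ∀ (u : ℝ) (y : Y), 0 ≤ u → u < r y → φ u (y, 0) = (y, u) := by
    intro u y h0 h1
    have h2 : rn V r 0 y ≤ u + 0 := by rw [rn_zero]; linarith
    have h3 : u + 0 < rn V r (0 + 1) y := by
      rw [show (0 : ℤ) + 1 = 1 from rfl, hrn1]; linarith
    have := hφ u 0 y 0 le_rfl (hr y) h2 h3
    rw [this, rn_zero]
    simp
  -- `φ (rn n y) (y,0) = (V^n y, 0)`
  have hφbase : ∀ (n : ℤ) (y : Y), φ (rn V r n y) (y, 0) = ((V ^ n) y, 0) := by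
    intro n y
    have h2 : rn V r n y ≤ rn V r n y + 0 := by linarith
    have h3 : rn V r n y + 0 < rn V r (n + 1) y := by
      rw [rn_succ]; linarith [hr ((V ^ n) y)]
    have := hφ (rn V r n y) 0 y n le_rfl (hr y) h2 h3
    rw [this]
    simp
  -- evaluation of φ with residual bounds
  have hφeval : ∀ (t u : ℝ) (y : Y) (n : ℤ), 0 ≤ u → u < r y →
      rn V r n y ≤ t + u → t + u < rn V r (n + 1) y →
      φ t (y, u) = ((V ^ n) y, t + u - rn V r n y) ∧
        0 ≤ t + u - rn V r n y ∧ t + u - rn V r n y < r ((V ^ n) y) := by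
    intro t u y n h0 h1 h2 h3
    refine ⟨hφ t u y n h0 h1 h2 h3, by linarith, ?_⟩
    rw [rn_succ] at h3
    linarith
  have hexi : ∀ (y : Y) (s : ℝ), ∃ n : ℤ, rn V r n y ≤ s ∧ s < rn V r (n + 1) y :=
    exists_index V r hr hdiv_top hdiv_bot
  -- A 0 = 1, F 0 = 0 on the domain
  have hA0 : ∀ (u : ℝ) (y : Y), 0 ≤ u → u < r y → A 0 (y, u) = 1 := by
    intro u y h0 h1
    have hφid : φ 0 (y, u) = (y, u) := by
      have h2 : rn V r 0 y ≤ 0 + u := by rw [rn_zero]; linarith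
      have h3 : 0 + u < rn V r (0 + 1) y := by
        rw [show (0 : ℤ) + 1 = 1 from rfl, hrn1]; linarith
      have := hφ 0 u y 0 h0 h1 h2 h3
      rw [this, rn_zero]
      simp
    have hAA := hA 0 0 u y h0 h1
    rw [hφid] at hAA
    norm_num at hAA
    have hne := hA_ne 0 u y h0 h1
    have h' : A 0 (y, u) * 1 = A 0 (y, u) * A 0 (y, u) := by rw [mul_one]; exact hAA
    exact (mul_left_cancel₀ hne h').symm
  have hF0z : ∀ (u : ℝ) (y : Y), 0 ≤ u → u < r y → F 0 (y, u) = 0 := by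
    intro u y h0 h1
    have hφid : φ 0 (y, u) = (y, u) := by
      have h2 : rn V r 0 y ≤ 0 + u := by rw [rn_zero]; linarith
      have h3 : 0 + u < rn V r (0 + 1) y := by
        rw [show (0 : ℤ) + 1 = 1 from rfl, hrn1]; linarith
      have := hφ 0 u y 0 h0 h1 h2 h3
      rw [this, rn_zero]
      simp
    have := hF 0 0 u y h0 h1
    rw [hφid, hA0 u y h0 h1] at this
    norm_num at this
    linarith
  -- the candidate functions
  set F0fun : Y × ℝ → ℝ := fun p => (A p.2 (p.1, 0))⁻¹ * F p.2 (p.1, 0) with hF0fun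
  set F1fun : Y → ℝ := fun y => F (r y) (y, 0) with hF1fun
  set F2fun : ℝ → Y × ℝ → ℝ :=
    fun t p => F t p - (A t p * F0fun (φ t p) - F0fun p) with hF2fun
  -- the key base identity: F at return times equals the signed sum
  have hG : ∀ (y : Y) (n : ℤ),
      F (rn V r n y) (y, 0) =
        zsum (fun k => A (rn V r k y) (y, 0) * F1fun ((V ^ k) y)) n := by
    intro y n
    have hrec : ∀ m : ℤ, F (rn V r (m + 1) y) (y, 0) =
        F (rn V r m y) (y, 0) + A (rn V r m y) (y, 0) * F1fun ((V ^ m) y) := by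
      intro m
      have := hF (rn V r m y) (r ((V ^ m) y)) 0 y le_rfl (hr y)
      rw [hφbase m y] at this
      rw [rn_succ]
      exact this
    induction n using Int.induction_on with
    | zero => rw [rn_zero, zsum_zero]; exact hF0z 0 y le_rfl (hr y)
    | succ k ih => rw [hrec k, ih, zsum_succ]
    | pred k ih =>
        have h1 : (-(k : ℤ) - 1) + 1 = -(k : ℤ) := by ring
        have e1 := hrec (-(k : ℤ) - 1)
        rw [h1] at e1
        have e2 := zsum_succ (fun k => A (rn V r k y) (y, 0) * F1fun ((V ^ k) y)) (-(k : ℤ) - 1)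
        rw [h1] at e2
        rw [ih] at e1
        rw [e2] at e1
        linarith
  -- flow property
  have hflow : ∀ (t1 t2 u : ℝ) (y : Y), 0 ≤ u → u < r y →
      φ (t1 + t2) (y, u) = φ t2 (φ t1 (y, u)) := by
    intro t1 t2 u y h0 h1
    obtain ⟨n1, hn1l, hn1r⟩ := hexi y (t1 + u)
    obtain ⟨e1, hw0, hw1⟩ := hφeval t1 u y n1 h0 h1 hn1l hn1r
    set w1 := t1 + u - rn V r n1 y with hw1def
    obtain ⟨n2, hn2l, hn2r⟩ := hexi ((V ^ n1) y) (t2 + w1)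
    obtain ⟨e2, _, _⟩ := hφeval t2 w1 ((V ^ n1) y) n2 hw0 hw1 hn2l hn2r
    have hsum : rn V r (n1 + n2) y ≤ (t1 + t2) + u := by
      rw [rn_add]
      linarith
    have hsum' : (t1 + t2) + u < rn V r ((n1 + n2) + 1) y := by
      have : (n1 + n2) + 1 = n1 + (n2 + 1) := by ring
      rw [this, rn_add]
      linarith
    obtain ⟨e3, _, _⟩ := hφeval (t1 + t2) u y (n1 + n2) h0 h1 hsum hsum'
    rw [e3, e1, e2]
    have hfst : (V ^ (n1 + n2)) y = (V ^ n2) ((V ^ n1) y) := perm_zpow_add V n1 n2 y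
    have hsnd : (t1 + t2) + u - rn V r (n1 + n2) y = t2 + w1 - rn V r n2 ((V ^ n1) y) := by
      rw [rn_add]
      ring
    rw [hfst, hsnd]
  -- F⁽¹⁾ is a semi-additive functional
  have hc : ∀ (t1 t2 u : ℝ) (y : Y), 0 ≤ u → u < r y →
      A (t1 + t2) (y, u) * F0fun (φ (t1 + t2) (y, u)) - F0fun (y, u) =
        (A t1 (y, u) * F0fun (φ t1 (y, u)) - F0fun (y, u)) +
          A t1 (y, u) *
            (A t2 (φ t1 (y, u)) * F0fun (φ t2 (φ t1 (y, u))) - F0fun (φ t1 (y, u))) := by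
    intro t1 t2 u y h0 h1
    rw [hA t1 t2 u y h0 h1, hflow t1 t2 u y h0 h1]
    ring
  refine ⟨F0fun, F1fun, F2fun, ?_, ?_, hc, ?_⟩
  · -- formula for F⁽²⁾
    intro t u y n h0 h1 h2 h3
    obtain ⟨e1, hw0, hw1⟩ := hφeval t u y n h0 h1 h2 h3
    set w := t + u - rn V r n y with hwdef
    have heq : u + t = rn V r n y + w := by rw [hwdef]; ring
    -- base relations
    have eF1 : F (u + t) (y, 0) = F u (y, 0) + A u (y, 0) * F t (y, u) := by
      have := hF u t 0 y le_rfl (hr y)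
      rwa [hφ0 u y h0 h1] at this
    have eF2 : F (rn V r n y + w) (y, 0) =
        F (rn V r n y) (y, 0) + A (rn V r n y) (y, 0) * F w ((V ^ n) y, 0) := by
      have := hF (rn V r n y) w 0 y le_rfl (hr y)
      rwa [hφbase n y] at this
    have eA1 : A (u + t) (y, 0) = A u (y, 0) * A t (y, u) := by
      have := hA u t 0 y le_rfl (hr y)
      rwa [hφ0 u y h0 h1] at this
    have eA2 : A (rn V r n y + w) (y, 0) =
        A (rn V r n y) (y, 0) * A w ((V ^ n) y, 0) := by
      have := hA (rn V r n y) w 0 y le_rfl (hr y)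
      rwa [hφbase n y] at this
    have haU : A u (y, 0) ≠ 0 := hA_ne u 0 y le_rfl (hr y)
    have haW : A w ((V ^ n) y, 0) ≠ 0 := hA_ne w 0 ((V ^ n) y) le_rfl (hr _)
    have haR : A (rn V r n y) (y, 0) ≠ 0 := hA_ne (rn V r n y) 0 y le_rfl (hr y)
    rw [← hG y n]
    simp only [hF2fun, hF0fun, e1]
    rw [heq] at eF1 eA1
    have eA : A u (y, 0) * A t (y, u) = A (rn V r n y) (y, 0) * A w ((V ^ n) y, 0) := by
      rw [← eA1, ← eA2]
    -- scalar identity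
    field_simp
    linear_combination (-(A w ((V ^ n) y, 0))) * eF1 +
      (A w ((V ^ n) y, 0)) * eF2 +
      (-(F w ((V ^ n) y, 0))) * eA
  · -- decomposition
    intro t u y h0 h1
    simp only [hF2fun]
    ring
  · -- F⁽²⁾ is a semi-additive functional
    intro t1 t2 u y h0 h1
    obtain ⟨m, hml, hmr⟩ := hexi y (t1 + u)
    obtain ⟨e1, hw0, hw1⟩ := hφeval t1 u y m h0 h1 hml hmr
    have hF' := hF t1 t2 u y h0 h1
    have hc' := hc t1 t2 u y h0 h1
    simp only [hF2fun]
    rw [hF', hc']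
    ring
end

section
/- Let {ψ_c}_{c>0} be the multiplicative special flow ψ_c(y,u) = (V^n y, u + ln c − r_n(y)) (where n is the unique integer with r_n(y) ≤ ln c + u < r_{n+1}(y)) on Ω = {(y,u) : y ∈ Y, 0 ≤ u < r(y)}, let {B_c}_{c>0} be a cocycle for {ψ_c} taking values in ℝ∖{0}, and let {J_c}_{c>0} be a semi-additive functional related to {B_c}. Then there exist functions J : Ω → ℝ and J₁ : Y → ℝ such that for all c > 0 and (y,u) ∈ Ω, J_c(y,u) = J^{(1)}_c(y,u) + J^{(2)}_c(y,u), where J^{(1)}_c(y,u) = B_c(y,u) J(ψ_c(y,u)) − J(y,u), and J^{(2)}_c(y,u) = (B_{e^u}(y,0))^{-1} Σ_{k∈[0,n)} B_{e^{r_k(y)}}(y,0) J₁(V^k y) with n the unique integer satisfying r_n(y) ≤ ln c + u < r_{n+1}(y). -/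
lemma zsum_unique (h f : ℤ → ℝ) (h0 : f 0 = 0)
    (hs : ∀ n : ℤ, f (n + 1) = f n + h n) : ∀ n : ℤ, f n = zsum h n := by
  intro n
  induction n using Int.induction_on with
  | zero => rw [h0, zsum_zero]
  | succ k ih => rw [hs, zsum_succ, ih]
  | pred k ih =>
    have h1 := hs (-(k : ℤ) - 1)
    have h2 := zsum_succ h (-(k : ℤ) - 1)
    have e2 : (-(k : ℤ) - 1) + 1 = -(k : ℤ) := by ring
    rw [e2] at h1 h2
    rw [ih] at h1
    linarith

/-- every semi-additive functional `J` related to a cocycle `B` over the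
multiplicative special flow `ψ_c(y,u) = (V^n y, u + ln c − r_n(y))` decomposes as
`J_c(y,u) = (B_c(y,u) J(ψ_c(y,u)) − J(y,u))
  + (B_{e^u}(y,0))⁻¹ Σ_{k∈[0,n)} B_{e^{r_k(y)}}(y,0) J₁(V^k y)`,
where `n` is the unique integer with `r_n(y) ≤ ln c + u < r_{n+1}(y)`. -/
theorem stmt4 {Y : Type*} (V : Equiv.Perm Y) (r : Y → ℝ) (hr : ∀ y, 0 < r y)
    (hdiv_top : ∀ y, Filter.Tendsto (fun n : ℕ => rn V r (n : ℤ) y) Filter.atTop Filter.atTop)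
    (hdiv_bot : ∀ y, Filter.Tendsto (fun n : ℕ => rn V r (-(n : ℤ)) y) Filter.atTop Filter.atBot)
    (ψ : ℝ → Y × ℝ → Y × ℝ)
    (hψ : ∀ (c u : ℝ) (y : Y) (n : ℤ), 0 < c → 0 ≤ u → u < r y →
      rn V r n y ≤ Real.log c + u → Real.log c + u < rn V r (n + 1) y →
      ψ c (y, u) = ((V ^ n) y, u + Real.log c - rn V r n y))
    (B : ℝ → Y × ℝ → ℝ)
    (hB_ne : ∀ (c u : ℝ) (y : Y), 0 < c → 0 ≤ u → u < r y → B c (y, u) ≠ 0)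
    (hB : ∀ (c1 c2 u : ℝ) (y : Y), 0 < c1 → 0 < c2 → 0 ≤ u → u < r y →
      B (c1 * c2) (y, u) = B c1 (y, u) * B c2 (ψ c1 (y, u)))
    (J : ℝ → Y × ℝ → ℝ)
    (hJ : ∀ (c1 c2 u : ℝ) (y : Y), 0 < c1 → 0 < c2 → 0 ≤ u → u < r y →
      J (c1 * c2) (y, u) = J c1 (y, u) + B c1 (y, u) * J c2 (ψ c1 (y, u))) :
    ∃ (J0 : Y × ℝ → ℝ) (J1 : Y → ℝ),
      ∀ (c u : ℝ) (y : Y) (n : ℤ), 0 < c → 0 ≤ u → u < r y →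
        rn V r n y ≤ Real.log c + u → Real.log c + u < rn V r (n + 1) y →
        J c (y, u) = (B c (y, u) * J0 (ψ c (y, u)) - J0 (y, u)) +
          (B (Real.exp u) (y, 0))⁻¹ *
            zsum (fun k => B (Real.exp (rn V r k y)) (y, 0) * J1 ((V ^ k) y)) n := by
  have hrn0 : ∀ y, rn V r 0 y = 0 := fun y => zsum_zero _
  have hrnsucc : ∀ (n : ℤ) (y : Y), rn V r (n + 1) y = rn V r n y + r ((V ^ n) y) :=
    fun n y => zsum_succ _ n
  -- ψ_{e^u}(y,0) = (y,u)
  have hψ0 : ∀ (u : ℝ) (y : Y), 0 ≤ u → u < r y → ψ (Real.exp u) (y, 0) = (y, u) := by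
    intro u y hu hu2
    have h := hψ (Real.exp u) 0 y 0 (Real.exp_pos u) le_rfl (hr y)
      (by rw [hrn0, Real.log_exp]; linarith)
      (by rw [Real.log_exp, hrnsucc, hrn0]; simpa using hu2)
    simpa [hrn0, Real.log_exp] using h
  -- ψ_{e^{r_n(y)}}(y,0) = (Vⁿ y, 0)
  have hψn : ∀ (n : ℤ) (y : Y), ψ (Real.exp (rn V r n y)) (y, 0) = ((V ^ n) y, 0) := by
    intro n y
    have h := hψ (Real.exp (rn V r n y)) 0 y n (Real.exp_pos _) le_rfl (hr y)
      (by rw [Real.log_exp]; linarith)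
      (by rw [Real.log_exp, hrnsucc]; have := hr ((V ^ n) y); linarith)
    simpa [Real.log_exp] using h
  have hJ1zero : ∀ y : Y, J 1 (y, 0) = 0 := by
    intro y
    have hψ1 : ψ 1 (y, 0) = (y, 0) := by
      simpa using hψ0 0 y le_rfl (hr y)
    have h := hJ 1 1 0 y one_pos one_pos le_rfl (hr y)
    rw [hψ1, one_mul] at h
    have hB1 := hB_ne 1 0 y one_pos le_rfl (hr y)
    have h2 : B 1 (y, 0) * J 1 (y, 0) = 0 := by linarith
    exact (mul_eq_zero.mp h2).resolve_left hB1
  refine ⟨fun p => (B (Real.exp p.2) (p.1, 0))⁻¹ * J (Real.exp p.2) (p.1, 0),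
    fun y => J (Real.exp (r y)) (y, 0), ?_⟩
  have hG : ∀ (y : Y) (n : ℤ), J (Real.exp (rn V r n y)) (y, 0) =
      zsum (fun k => B (Real.exp (rn V r k y)) (y, 0) * J (Real.exp (r ((V ^ k) y))) ((V ^ k) y, 0)) n := by
    intro y
    apply zsum_unique
    · simp [hrn0, hJ1zero y]
    · intro n
      have hstep := hJ (Real.exp (rn V r n y)) (Real.exp (r ((V ^ n) y))) 0 y
        (Real.exp_pos _) (Real.exp_pos _) le_rfl (hr y)
      rw [hψn n y] at hstep
      rw [hrnsucc, Real.exp_add]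
      exact hstep
  intro c u y n hc hu hur h1 h2
  set a := B (Real.exp u) (y, 0) with ha_def
  have ha_ne : a ≠ 0 := hB_ne (Real.exp u) 0 y (Real.exp_pos u) le_rfl (hr y)
  set u' := Real.log c + u - rn V r n y with hu'def
  have hu'0 : 0 ≤ u' := by simp only [hu'def]; linarith
  have hu'r : u' < r ((V ^ n) y) := by
    rw [hrnsucc] at h2; simp only [hu'def]; linarith
  set b := B (Real.exp u') ((V ^ n) y, 0) with hb_def
  have hb_ne : b ≠ 0 := hB_ne (Real.exp u') 0 ((V ^ n) y) (Real.exp_pos _) le_rfl (hr _)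
  have hψc : ψ c (y, u) = ((V ^ n) y, u') := by
    rw [hψ c u y n hc hu hur h1 h2]
    have : u + Real.log c - rn V r n y = u' := by rw [hu'def]; ring
    rw [this]
  have hexp : Real.exp u * c = Real.exp (rn V r n y) * Real.exp u' := by
    rw [← Real.exp_add,
      show rn V r n y + u' = u + Real.log c by rw [hu'def]; ring,
      Real.exp_add, Real.exp_log hc]
  -- (a): J(e^u c)(y,0) = J(e^u)(y,0) + a · J_c(y,u)
  have ha := hJ (Real.exp u) c 0 y (Real.exp_pos u) hc le_rfl (hr y)
  rw [hψ0 u y hu hur] at ha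
  -- (c): J(e^{r_n} e^{u'})(y,0) = J(e^{r_n})(y,0) + B(e^{r_n})(y,0) · J(e^{u'})(Vⁿy,0)
  have hc3 := hJ (Real.exp (rn V r n y)) (Real.exp u') 0 y
    (Real.exp_pos _) (Real.exp_pos _) le_rfl (hr y)
  rw [hψn n y] at hc3
  rw [hexp, hc3] at ha
  -- (d): B relations
  have hd1 := hB (Real.exp u) c 0 y (Real.exp_pos u) hc le_rfl (hr y)
  rw [hψ0 u y hu hur] at hd1
  have hd2 := hB (Real.exp (rn V r n y)) (Real.exp u') 0 y
    (Real.exp_pos _) (Real.exp_pos _) le_rfl (hr y)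
  rw [hψn n y] at hd2
  rw [hexp, hd2] at hd1
  -- assemble
  rw [hψc, ← hG y n]
  set g := B (Real.exp (rn V r n y)) (y, 0) with hg_def
  set X := J (Real.exp u') ((V ^ n) y, 0) with hX_def
  set Y0 := J (Real.exp u) (y, 0) with hY0_def
  set G := J (Real.exp (rn V r n y)) (y, 0) with hG_def
  have hBc : B c (y, u) = g * b / a := by
    field_simp
    linarith [hd1]
  have hJc : J c (y, u) = (G + g * X - Y0) / a := by
    field_simp
    linarith [ha]
  rw [hBc, hJc]
  simp only []
  field_simp
  rw [← hb_def, ← ha_def, ← hX_def, ← hY0_def]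
  linear_combination (-(g * X)) * mul_inv_cancel₀ hb_ne + Y0 * mul_inv_cancel₀ ha_ne
end

section
/- Let (X, 𝒳, μ) be a σ-finite measure space, {φ_t}_{t∈ℝ} a measurable nonsingular flow on X (each φ_t is invertible with inverse φ_{−t}), and {A_t}_{t∈ℝ} a jointly measurable cocycle for the flow taking values in ℝ∖{0}. Let δ : ℝ × X → ℝ be jointly measurable and suppose: (i) for every s, t ∈ ℝ, δ(s+t, x) = δ(s, x) + A_s(x) δ(t, φ_s(x)) for μ-a.e. x ∈ X; and (ii) for Lebesgue-a.e. t ∈ ℝ, δ(t, x) = 0 for μ-a.e. x ∈ X. Then for every r ∈ ℝ, δ(r, x) = 0 for μ-a.e. x ∈ X. -/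
open MeasureTheory

/-! A generic `s` has both `s` and `r - s` in the conull set of good times, since `s ↦ r - s`
preserves Lebesgue-null sets. Writing `r = s + (r - s)`, the almost semi-additivity relation gives
`δ(r, x) = δ(s, x) + A_s(x) δ(r - s, φ_s x) = 0` for a.e. `x`, the second term vanishing because
`φ_s` pulls null sets back to null sets. -/

theorem MeasureTheory.ae_comp_of_preimage_null {α β : Type*} [MeasurableSpace α]
    [MeasurableSpace β] {μ : Measure α} {ν : Measure β} {f : α → β}
    (hf : ∀ s, MeasurableSet s → ν s = 0 → μ (f ⁻¹' s) = 0) {p : β → Prop}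
    (h : ∀ᵐ y ∂ν, p y) : ∀ᵐ x ∂μ, p (f x) := by
  rw [ae_iff] at h ⊢
  -- `hf` only speaks of measurable sets, so pass to a measurable null hull.
  refine measure_mono_null (Set.preimage_mono (f := f) (subset_toMeasurable ν {y | ¬p y})) ?_
  exact hf _ (measurableSet_toMeasurable ν _) (by rwa [measure_toMeasurable])

theorem MeasureTheory.exists_and_sub_of_ae {G : Type*} [MeasurableSpace G] [AddGroup G]
    [MeasurableAdd₂ G] [MeasurableNeg G] {μ : Measure G} [SFinite μ] [μ.IsAddLeftInvariant]
    [NeZero μ] {p : G → Prop} (h : ∀ᵐ g ∂μ, p g) (r : G) : ∃ s, p s ∧ p (r - s) :=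
  (h.and ((quasiMeasurePreserving_sub_left μ r).ae h)).exists

theorem stmt8_general {X : Type*} [MeasurableSpace X] (μ : Measure X)
    (φ : ℝ → X → X)
    (hφ_ns : ∀ (t : ℝ) (s : Set X), MeasurableSet s → μ s = 0 → μ (φ t ⁻¹' s) = 0)
    (A : ℝ → X → ℝ)
    (δ : ℝ → X → ℝ)
    (hi : ∀ s t : ℝ, ∀ᵐ x ∂μ, δ (s + t) x = δ s x + A s x * δ t (φ s x))
    (hii : ∀ᵐ t ∂(volume : Measure ℝ), ∀ᵐ x ∂μ, δ t x = 0) :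
    ∀ r : ℝ, ∀ᵐ x ∂μ, δ r x = 0 := by
  intro r
  obtain ⟨s, hs, hrs⟩ := exists_and_sub_of_ae hii r
  filter_upwards [hi s (r - s), hs, ae_comp_of_preimage_null (hφ_ns s) hrs]
    with x hsplit hδs hδrs
  rw [← add_sub_cancel s r, hsplit, hδs, hδrs, zero_add, mul_zero]

/-- if `δ` is jointly measurable, satisfies the almost semi-additivity
relation `δ(s+t,·) = δ(s,·) + A_s(·) δ(t, φ_s(·))` μ-a.e. for every `s, t ∈ ℝ`, and
`δ(t,·) = 0` μ-a.e. for Lebesgue-a.e. `t`, then `δ(r,·) = 0` μ-a.e. for every `r ∈ ℝ`. -/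
theorem stmt8 {X : Type*} [MeasurableSpace X] (μ : Measure X) [SigmaFinite μ]
    (φ : ℝ → X → X)
    (hφ_add : ∀ (t1 t2 : ℝ) (x : X), φ (t1 + t2) x = φ t1 (φ t2 x))
    (hφ_zero : ∀ x : X, φ 0 x = x)
    (hφ_meas : Measurable (fun p : ℝ × X => φ p.1 p.2))
    (hφ_ns : ∀ (t : ℝ) (s : Set X), MeasurableSet s → μ s = 0 → μ (φ t ⁻¹' s) = 0)
    (A : ℝ → X → ℝ)
    (hA_meas : Measurable (fun p : ℝ × X => A p.1 p.2))
    (hA_ne : ∀ (t : ℝ) (x : X), A t x ≠ 0)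
    (hA : ∀ (t1 t2 : ℝ) (x : X), A (t1 + t2) x = A t1 x * A t2 (φ t1 x))
    (δ : ℝ → X → ℝ)
    (hδ_meas : Measurable (fun p : ℝ × X => δ p.1 p.2))
    (hi : ∀ s t : ℝ, ∀ᵐ x ∂μ, δ (s + t) x = δ s x + A s x * δ t (φ s x))
    (hii : ∀ᵐ t ∂(volume : Measure ℝ), ∀ᵐ x ∂μ, δ t x = 0) :
    ∀ r : ℝ, ∀ᵐ x ∂μ, δ r x = 0 :=
  stmt8_general μ φ hφ_ns A δ hi hii
end

section
/- Let 0 < α < 2 and H > 0, let (X, 𝒳, μ) be a standard Lebesgue space, {ψ_c}_{c>0} a measurable nonsingular multiplicative flow on X, {g_c}_{c>0} a 1-semi-additive functional for the flow, and {b̃_c}_{c>0} a cocycle for the flow taking values in ℝ∖{0}. Let G : X × ℝ → ℝ be jointly measurable and j_c : X → ℝ be functions such that for every c > 0, j_c(x) = c^{-(H−1/α)} G(x, cu) − b̃_c(x) G(ψ_c(x), u + g_c(x)) for μ(dx)du-a.e. (x,u) ∈ X × ℝ. Then for all c1, c2 > 0, j_{c1c2}(x) = c2^{-(H−1/α)}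 j_{c1}(x) + b̃_{c1}(x) j_{c2}(ψ_{c1}(x)) for μ-a.e. x ∈ X. -/
/-!
Fix `c₁, c₂ > 0`. Substituting `u ↦ c₂ u` in the defining identity of `j_{c₁}` and
`(x, u) ↦ (ψ_{c₁} x, u + g_{c₁}(x)/c₂)` in that of `j_{c₂}` turns the identity for `j_{c₁c₂}`,
by the flow, cocycle and semi-additivity relations, into the claimed one at `μ(dx)du`-almost
every `(x, u)`. Both substitutions are fibrewise affine skew products over nonsingular maps,
so they preserve null sets of `μ ⊗ du`, which makes them legitimate.
-/

open MeasureTheory Measure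

theorem Real.quasiMeasurePreserving_affine {a : ℝ} (ha : a ≠ 0) (b : ℝ) :
    QuasiMeasurePreserving (fun u : ℝ => a * u + b) volume volume :=
  (measurePreserving_add_right volume b).quasiMeasurePreserving.comp
    (Measure.quasiMeasurePreserving_smul volume ha)

namespace MeasureTheory.Measure.QuasiMeasurePreserving

variable {α β γ δ : Type*} [MeasurableSpace α] [MeasurableSpace β] [MeasurableSpace γ]
  [MeasurableSpace δ] {μa : Measure α} {μb : Measure β} {μc : Measure γ} {μd : Measure δ}

theorem of_preimage_null {f : α → β} (hf : Measurable f)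
    (h : ∀ s, MeasurableSet s → μb s = 0 → μa (f ⁻¹' s) = 0) :
    QuasiMeasurePreserving f μa μb :=
  ⟨hf, AbsolutelyContinuous.mk fun s hs hs0 => by rw [map_apply hf hs]; exact h s hs hs0⟩

theorem skew_product [SFinite μd] {f : α → β}
    (hf : QuasiMeasurePreserving f μa μb) {g : α → γ → δ} (hgm : Measurable (Function.uncurry g))
    (hg : ∀ x, QuasiMeasurePreserving (g x) μc μd) :
    QuasiMeasurePreserving (fun p : α × γ => (f p.1, g p.1 p.2)) (μa.prod μc) (μb.prod μd) := by
  have hm : Measurable fun p : α × γ => (f p.1, g p.1 p.2) :=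
    (hf.measurable.comp measurable_fst).prodMk hgm
  refine ⟨hm, AbsolutelyContinuous.mk fun s hs hs0 => ?_⟩
  rw [map_apply hm hs]
  refine measure_prod_null_of_ae_null (hm hs) ?_
  filter_upwards [hf.ae (measure_ae_null_of_prod_null hs0)] with x hx
  exact (hg x).preimage_null hx

theorem prod_affine {f : α → β} (hf : QuasiMeasurePreserving f μa μb) {a : ℝ} (ha : a ≠ 0)
    {b : α → ℝ} (hb : Measurable b) :
    QuasiMeasurePreserving (fun p : α × ℝ => (f p.1, a * p.2 + b p.1))
      (μa.prod volume) (μb.prod volume) :=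
  hf.skew_product (g := fun x u => a * u + b x)
    ((measurable_snd.const_mul a).add (hb.comp measurable_fst))
    fun x => Real.quasiMeasurePreserving_affine ha (b x)

end MeasureTheory.Measure.QuasiMeasurePreserving

theorem MeasureTheory.ae_of_ae_prod_fst {α β : Type*} [MeasurableSpace α] [MeasurableSpace β]
    {μ : Measure α} {ν : Measure β} [SFinite ν] [NeZero ν] {P : α → Prop}
    (h : ∀ᵐ p ∂μ.prod ν, P p.1) : ∀ᵐ x ∂μ, P x := by
  filter_upwards [ae_ae_of_ae_prod h] with x hx
  obtain ⟨_, hP⟩ := hx.exists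
  exact hP

theorem stmt10_general {X : Type*} [MeasurableSpace X]
    (μ : Measure X)
    (α H : ℝ)
    (ψ : ℝ → X → X)
    (hψ_mul : ∀ c1 c2 : ℝ, 0 < c1 → 0 < c2 → ∀ x : X, ψ (c1 * c2) x = ψ c1 (ψ c2 x))
    (hψ_meas : Measurable (fun p : ℝ × X => ψ p.1 p.2))
    (hψ_ns : ∀ c : ℝ, 0 < c → ∀ s : Set X, MeasurableSet s → μ s = 0 → μ (ψ c ⁻¹' s) = 0)
    -- the 1-semi-additive functional `g`
    (g : ℝ → X → ℝ)
    (hg_meas : Measurable (fun p : ℝ × X => g p.1 p.2))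
    (hg : ∀ c1 c2 : ℝ, 0 < c1 → 0 < c2 → ∀ x : X,
      g (c1 * c2) x = g c1 x / c2 + g c2 (ψ c1 x))
    -- the cocycle `b̃` with values in `ℝ∖{0}`
    (btil : ℝ → X → ℝ)
    (hbtil : ∀ c1 c2 : ℝ, 0 < c1 → 0 < c2 → ∀ x : X,
      btil (c1 * c2) x = btil c1 x * btil c2 (ψ c1 x))
    (G : X × ℝ → ℝ)
    (j : ℝ → X → ℝ)
    (hj : ∀ c : ℝ, 0 < c → ∀ᵐ p ∂(μ.prod (volume : Measure ℝ)),
      j c p.1 = c ^ (-(H - 1 / α)) * G (p.1, c * p.2) -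
        btil c p.1 * G (ψ c p.1, p.2 + g c p.1)) :
    ∀ c1 c2 : ℝ, 0 < c1 → 0 < c2 → ∀ᵐ x ∂μ,
      j (c1 * c2) x = c2 ^ (-(H - 1 / α)) * j c1 x + btil c1 x * j c2 (ψ c1 x) := by
  intro c1 c2 hc1 hc2
  have hψ₁ : QuasiMeasurePreserving (ψ c1) μ μ :=
    .of_preimage_null hψ_meas.of_uncurry_left (hψ_ns c1 hc1)
  have hg₁ : Measurable (g c1) := hg_meas.of_uncurry_left
  have hj₁ := ((QuasiMeasurePreserving.id μ).prod_affine hc2.ne'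
    (measurable_const (a := (0 : ℝ)))).ae (hj c1 hc1)
  have hj₂ := (hψ₁.prod_affine one_ne_zero (hg₁.div_const c2)).ae (hj c2 hc2)
  refine ae_of_ae_prod_fst (ν := (volume : Measure ℝ)) ?_
  filter_upwards [hj (c1 * c2) (mul_pos hc1 hc2), hj₁, hj₂] with ⟨x, u⟩ h₁₂ h₁ h₂
  simp only [id, add_zero, one_mul] at h₁₂ h₁ h₂
  have hψ₂₁ : ψ (c1 * c2) x = ψ c2 (ψ c1 x) := by rw [mul_comm]; exact hψ_mul c2 c1 hc2 hc1 x
  have hshift : c2 * (u + g c1 x / c2) = c2 * u + g c1 x := by field_simp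
  have hg₁₂ : u + g c1 x / c2 + g c2 (ψ c1 x) = u + g (c1 * c2) x := by
    rw [hg c1 c2 hc1 hc2]; ring
  rw [h₁₂, h₁, h₂, hshift, hg₁₂, ← hψ₂₁, Real.mul_rpow hc1.le hc2.le, mul_assoc c1 c2 u,
    hbtil c1 c2 hc1 hc2 x]
  ring

/-- if for every `c > 0`,
`j_c(x) = c^{-(H−1/α)} G(x,cu) − b̃_c(x) G(ψ_c(x), u + g_c(x))` for
`μ(dx)du`-a.e. `(x,u)`, then for all `c1, c2 > 0`,
`j_{c1c2}(x) = c2^{-(H−1/α)} j_{c1}(x) + b̃_{c1}(x) j_{c2}(ψ_{c1}(x))` for μ-a.e. `x`,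
i.e. `{j_c}` is an almost 2-semi-additive functional. -/
theorem stmt10 {X : Type*} [MeasurableSpace X] [StandardBorelSpace X]
    (μ : Measure X) [SigmaFinite μ]
    (α H : ℝ) (hα0 : 0 < α) (hα2 : α < 2) (hH : 0 < H)
    (ψ : ℝ → X → X)
    (hψ_mul : ∀ c1 c2 : ℝ, 0 < c1 → 0 < c2 → ∀ x : X, ψ (c1 * c2) x = ψ c1 (ψ c2 x))
    (hψ_one : ∀ x : X, ψ 1 x = x)
    (hψ_meas : Measurable (fun p : ℝ × X => ψ p.1 p.2))
    (hψ_ns : ∀ c : ℝ, 0 < c → ∀ s : Set X, MeasurableSet s → μ s = 0 → μ (ψ c ⁻¹' s) = 0)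
    -- the 1-semi-additive functional `g`
    (g : ℝ → X → ℝ)
    (hg_meas : Measurable (fun p : ℝ × X => g p.1 p.2))
    (hg : ∀ c1 c2 : ℝ, 0 < c1 → 0 < c2 → ∀ x : X,
      g (c1 * c2) x = g c1 x / c2 + g c2 (ψ c1 x))
    -- the cocycle `b̃` with values in `ℝ∖{0}`
    (btil : ℝ → X → ℝ)
    (hbtil_meas : Measurable (fun p : ℝ × X => btil p.1 p.2))
    (hbtil_ne : ∀ c : ℝ, 0 < c → ∀ x : X, btil c x ≠ 0)
    (hbtil : ∀ c1 c2 : ℝ, 0 < c1 → 0 < c2 → ∀ x : X,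
      btil (c1 * c2) x = btil c1 x * btil c2 (ψ c1 x))
    (G : X × ℝ → ℝ)
    (hG_meas : Measurable G)
    (j : ℝ → X → ℝ)
    (hj : ∀ c : ℝ, 0 < c → ∀ᵐ p ∂(μ.prod (volume : Measure ℝ)),
      j c p.1 = c ^ (-(H - 1 / α)) * G (p.1, c * p.2) -
        btil c p.1 * G (ψ c p.1, p.2 + g c p.1)) :
    ∀ c1 c2 : ℝ, 0 < c1 → 0 < c2 → ∀ᵐ x ∂μ,
      j (c1 * c2) x = c2 ^ (-(H - 1 / α)) * j c1 x + btil c1 x * j c2 (ψ c1 x) :=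
  stmt10_general μ α H ψ hψ_mul hψ_meas hψ_ns g hg_meas hg btil hbtil G j hj
end

section
/- Let Y be a set and consider the dissipative multiplicative flow ψ_c(y,u) = (y, u + ln c) on Y × ℝ. Let κ ∈ ℝ, let b : Y × ℝ → {−1,1} be a function and define the cocycle b_c(y,u) = b(y, u + ln c)/b(y,u). Suppose j : (0,∞) × (Y × ℝ) → ℝ, written j_c(y,u), satisfies j_{c1c2}(y,u) = c2^{-κ} j_{c1}(y,u) + b_{c1}(y,u) j_{c2}(y, u + ln c1) for all c1, c2 > 0 and all (y,u) ∈ Y × ℝ. Then there exists a function j* : Y × ℝ → ℝ such that j_c(y,u) = b_c(y,u) j*(y, u + ln c) − c^{-κ} j*(y,u) for all c > 0 and all (y,u) ∈ Y × ℝ. -/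
/-!
The flow is dissipative with cross-section `Y × {0}`: every point `(y, u)` is `ψ_{e^u}(y, 0)`.
The functional equation at `(y, 0)` with `c1 = e^u` reads
`j_{e^u c}(y, 0) = c^{-κ} j_{e^u}(y, 0) + b_{e^u}(y, 0) j_c(y, u)`, so `j` is determined by its values
along the cross-section, and `j*(y, u) = b(y, 0)/b(y, u) · j_{e^u}(y, 0)` is the required potential.
-/

open Real

noncomputable def orbitPotential {Y : Type*} (b : Y × ℝ → ℝ) (j : ℝ → Y × ℝ → ℝ) (p : Y × ℝ) : ℝ :=
  b (p.1, 0) / b p * j (exp p.2) (p.1, 0)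

/-- for the dissipative flow `ψ_c(y,u) = (y, u + ln c)` on `Y × ℝ` and
the cocycle `b_c(y,u) = b(y, u + ln c)/b(y,u)` (with `b` taking values in `{−1,1}`),
every solution of the 2-semi-additive functional equation
`j_{c1c2}(y,u) = c2^{-κ} j_{c1}(y,u) + b_{c1}(y,u) j_{c2}(y, u + ln c1)` is of the form
`j_c(y,u) = b_c(y,u) j*(y, u + ln c) − c^{-κ} j*(y,u)`. -/
theorem stmt14 {Y : Type*} (κ : ℝ)
    (b : Y × ℝ → ℝ) (hb_val : ∀ p : Y × ℝ, b p = 1 ∨ b p = -1)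
    (j : ℝ → Y × ℝ → ℝ)
    (hj : ∀ c1 c2 : ℝ, 0 < c1 → 0 < c2 → ∀ (y : Y) (u : ℝ),
      j (c1 * c2) (y, u) = c2 ^ (-κ) * j c1 (y, u) +
        (b (y, u + Real.log c1) / b (y, u)) * j c2 (y, u + Real.log c1)) :
    ∃ jstar : Y × ℝ → ℝ, ∀ c : ℝ, 0 < c → ∀ (y : Y) (u : ℝ),
      j c (y, u) = (b (y, u + Real.log c) / b (y, u)) * jstar (y, u + Real.log c) -
        c ^ (-κ) * jstar (y, u) := by
  have hb : ∀ p, b p ≠ 0 := fun p => by rcases hb_val p with h | h <;> simp [h]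
  refine ⟨orbitPotential b j, fun c hc y u => ?_⟩
  have hcross := hj (exp u) c (exp_pos u) hc y 0
  rw [log_exp, zero_add] at hcross
  have hflow : exp (u + log c) = exp u * c := by rw [exp_add, exp_log hc]
  simp only [orbitPotential, hflow, hcross]
  field_simp [hb]
  ring
end

section
/- Let Y be a set and consider the dissipative multiplicative flow ψ_c(y,u) = (y, u + ln c) on Y × ℝ. Suppose g : (0,∞) × (Y × ℝ) → ℝ, written g_c(y,u), satisfies g_{c1c2}(y,u) = g_{c1}(y,u)/c2 + g_{c2}(y, u + ln c1) for all c1, c2 > 0 and all (y,u) ∈ Y × ℝ. Then there exists a function g* : Y × ℝ → ℝ such that g_c(y,u) = g*(y, u + ln c) − c^{-1} g*(y,u) for all c > 0 and all (y,u) ∈ Y × ℝ. -/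
/-!
The flow admits a positive "clock" `σ (y, u) = exp (-u)` with `σ (ψ_c x) = c⁻¹ σ x`, so `ψ_{σ x} x`
lies on the section `σ = 1`. The semi-additivity relation for `c1 = c`, `c2 = c⁻¹ σ x` (so that
`c1 c2 = σ x`) then says exactly that `g*(x) := -σ x · g_{σ x}(x)` is a potential for `g`.
-/

def IsOneSemiAdditive {X : Type*} (ψ : ℝ → X → X) (g : ℝ → X → ℝ) : Prop :=
  ∀ c1 c2 : ℝ, 0 < c1 → 0 < c2 → ∀ x, g (c1 * c2) x = g c1 x / c2 + g c2 (ψ c1 x)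

namespace IsOneSemiAdditive

def potential {X : Type*} (g : ℝ → X → ℝ) (σ : X → ℝ) (x : X) : ℝ :=
  -(σ x * g (σ x) x)

variable {X : Type*} {ψ : ℝ → X → X} {g : ℝ → X → ℝ}

theorem eq_potential_sub (hg : IsOneSemiAdditive ψ g) {σ : X → ℝ} (hσ_pos : ∀ x, 0 < σ x)
    (hσ : ∀ c, 0 < c → ∀ x, σ (ψ c x) = c⁻¹ * σ x) {c : ℝ} (hc : 0 < c) (x : X) :
    g c x = potential g σ (ψ c x) - c⁻¹ * potential g σ x := by
  have hσx := hσ_pos x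
  have key := hg c (c⁻¹ * σ x) hc (by positivity) x
  rw [mul_inv_cancel_left₀ hc.ne'] at key
  simp only [potential, hσ c hc x]
  field_simp at key ⊢
  linarith

end IsOneSemiAdditive

/-- for the dissipative flow `ψ_c(y,u) = (y, u + ln c)` on `Y × ℝ`,
every solution of the 1-semi-additive functional equation
`g_{c1c2}(y,u) = g_{c1}(y,u)/c2 + g_{c2}(y, u + ln c1)` is of the form
`g_c(y,u) = g*(y, u + ln c) − c⁻¹ g*(y,u)`. -/
theorem stmt16 {Y : Type*}
    (g : ℝ → Y × ℝ → ℝ)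
    (hg : ∀ c1 c2 : ℝ, 0 < c1 → 0 < c2 → ∀ (y : Y) (u : ℝ),
      g (c1 * c2) (y, u) = g c1 (y, u) / c2 + g c2 (y, u + Real.log c1)) :
    ∃ gstar : Y × ℝ → ℝ, ∀ c : ℝ, 0 < c → ∀ (y : Y) (u : ℝ),
      g c (y, u) = gstar (y, u + Real.log c) - c⁻¹ * gstar (y, u) := by
  let ψ : ℝ → Y × ℝ → Y × ℝ := fun c p => (p.1, p.2 + Real.log c)
  have hψ : IsOneSemiAdditive ψ g := fun c1 c2 hc1 hc2 p => hg c1 c2 hc1 hc2 p.1 p.2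
  have hclock : ∀ c, 0 < c → ∀ p, Real.exp (-(ψ c p).2) = c⁻¹ * Real.exp (-p.2) := by
    intro c hc p
    rw [neg_add, Real.exp_add, Real.exp_neg (Real.log c), Real.exp_log hc, mul_comm]
  exact ⟨IsOneSemiAdditive.potential g fun p => Real.exp (-p.2), fun c hc y u =>
    hψ.eq_potential_sub (fun _ => Real.exp_pos _) hclock hc (y, u)⟩
end

section
/- Let q : Z → (0,∞) be a function on a set Z and let {ψ_c}_{c>0} be the cyclic flow ψ_c(z,v) = (z, {v + ln c}_{q(z)}) on Z × [0,q(·)) = {(z,v) : z ∈ Z, 0 ≤ v < q(z)}. Suppose g : (0,∞) × (Z × [0,q(·))) → ℝ, written g_c(z,v), is a 1-semi-additive functional for this flow, i.e. g_{c1c2}(z,v) = g_{c1}(z,v)/c2 + g_{c2}(z, {v + ln c1}_{q(z)}) for all c1, c2 > 0 and all (z,v) with 0 ≤ v < q(z). Then there exists a function g : Z × [0,q(·)) → ℝ such that g_c(z,v) = g(z, {v + ln c}_{q(z)}) − c^{-1} g(z,v) for all c > 0 and all (z,v) with 0 ≤ v < q(z). -/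
/-- `[v]_a = max{n ∈ ℤ : na ≤ v}` (for `a > 0` this is `⌊v/a⌋`). -/
noncomputable def ibr (a v : ℝ) : ℤ := ⌊v / a⌋

/-- `{v}_a = v − a[v]_a`, so that `0 ≤ {v}_a < a` for `a > 0`. -/
noncomputable def fr (a v : ℝ) : ℝ := v - a * ibr a v

lemma fr_self {a v : ℝ} (ha : 0 < a) (h0 : 0 ≤ v) (h1 : v < a) : fr a v = v := by
  have : ⌊v / a⌋ = 0 := by
    rw [Int.floor_eq_zero_iff]
    constructor
    · positivity
    · rw [div_lt_one ha]; exact h1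
  simp [fr, ibr, this]

lemma fr_add_self {a v : ℝ} (ha : 0 < a) : fr a (v + a) = fr a v := by
  have : (v + a) / a = v / a + 1 := by field_simp
  simp [fr, ibr, this, Int.floor_add_one]
  ring

/-- every 1-semi-additive functional for the cyclic flow
`ψ_c(z,v) = (z, {v + ln c}_{q(z)})` on `Z × [0,q(·))` is of the form
`g_c(z,v) = g(z, {v + ln c}_{q(z)}) − c⁻¹ g(z,v)`. -/
theorem stmt17 {Z : Type*} (q : Z → ℝ) (hq : ∀ z, 0 < q z)
    (g : ℝ → Z × ℝ → ℝ)
    (hg : ∀ c1 c2 : ℝ, 0 < c1 → 0 < c2 → ∀ (z : Z) (v : ℝ), 0 ≤ v → v < q z →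
      g (c1 * c2) (z, v) = g c1 (z, v) / c2 +
        g c2 (z, fr (q z) (v + Real.log c1))) :
    ∃ g0 : Z × ℝ → ℝ, ∀ c : ℝ, 0 < c → ∀ (z : Z) (v : ℝ), 0 ≤ v → v < q z →
      g c (z, v) = g0 (z, fr (q z) (v + Real.log c)) - c⁻¹ * g0 (z, v) := by
  refine ⟨fun p => g (Real.exp (q p.1)) p / (1 - (Real.exp (q p.1))⁻¹), ?_⟩
  intro c hc z v h0 h1
  have hez : (0:ℝ) < Real.exp (q z) := Real.exp_pos _
  have h1e : (Real.exp (q z))⁻¹ < 1 := by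
    have : 1 < Real.exp (q z) := by nlinarith [Real.add_one_le_exp (q z), hq z]
    rw [inv_lt_one_iff₀]; right; exact this
  have hk : (0:ℝ) < 1 - (Real.exp (q z))⁻¹ := by linarith
  have e1 := hg c (Real.exp (q z)) hc hez z v h0 h1
  have e2 := hg (Real.exp (q z)) c hez hc z v h0 h1
  rw [Real.log_exp] at e2
  have hfr : fr (q z) (v + q z) = v := by
    rw [fr_add_self (hq z), fr_self (hq z) h0 h1]
  rw [hfr, mul_comm] at e2
  rw [e2] at e1
  -- e1 : g(exp q)(z,v)/c + g c (z,v) = g c (z,v)/exp q + g(exp q)(z, fr ...)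
  set D := g (Real.exp (q z)) (z, v) with hD
  set D' := g (Real.exp (q z)) (z, fr (q z) (v + Real.log c)) with hD'
  set G := g c (z, v) with hG
  simp only
  rw [← hD, ← hD']
  have hne : (1 - (Real.exp (q z))⁻¹) ≠ 0 := ne_of_gt hk
  have hE1 : Real.exp (q z) - 1 ≠ 0 := by
    have : 1 < Real.exp (q z) := by nlinarith [Real.add_one_le_exp (q z), hq z]
    linarith
  field_simp [hc.ne', hez.ne', hE1] at e1 ⊢
  linear_combination e1
end
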